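/- arXiv:2110.03093 — 10 statements merged into one kernel-verified Lean document; each statement's English description precedes it below -/
import Mathlib

section
/- Let f : ℝⁿ → ℝⁿ be continuously differentiable and let φ be the solution map of the ODE ẋ = f(x). Let Ω ⊂ ℝⁿ be a compact set and suppose there exists a continuously differentiable function V : ℝⁿ → [0,∞) such that (i) ∇V(x)ᵀ f(x) ≤ −(V(x) − 1) for all x ∈ Ω, (ii) {x ∈ Ω : V(x) ≤ 1} ⊆ Ω° (the interior of Ω), and (iii) {x ∈ Ω : V(x) ≤ 1} ≠ ∅. Then the set A := {x ∈ Ω : V(x) ≤ 1} is a stable compact attractor set of the ODE. -/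
open Set Filter MeasureTheory Metric Topology

noncomputable section

/-- `φ` is a solution map of the ODE `ẋ = f(x)` on `ℝⁿ × [0,∞)`. -/
def IsSolutionMap {n : ℕ} (f : EuclideanSpace ℝ (Fin n) → EuclideanSpace ℝ (Fin n))
    (φ : EuclideanSpace ℝ (Fin n) → ℝ → EuclideanSpace ℝ (Fin n)) : Prop :=
  (∀ x, ∀ t ≥ (0:ℝ), HasDerivWithinAt (φ x) (f (φ x t)) (Set.Ici 0) t) ∧
  (∀ x, φ x 0 = x) ∧
  (∀ x, ∀ t ≥ (0:ℝ), ∀ s ≥ (0:ℝ), φ (φ x t) s = φ x (t + s))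

/-- `A` is a stable compact attractor set of the ODE with solution map `φ`. -/
def IsAttractor {n : ℕ} (φ : EuclideanSpace ℝ (Fin n) → ℝ → EuclideanSpace ℝ (Fin n))
    (A : Set (EuclideanSpace ℝ (Fin n))) : Prop :=
  IsCompact A ∧ A.Nonempty ∧
  (∀ x ∈ A, ∀ t ≥ (0:ℝ), φ x t ∈ A) ∧
  (∀ x ∈ A, ∃ δ > (0:ℝ), ∀ ε > (0:ℝ), ∃ T ≥ (0:ℝ),
    ∀ y ∈ Metric.ball x δ, ∀ t ≥ T, Metric.infDist (φ y t) A < ε) ∧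
  (∀ ε > (0:ℝ), ∃ δ > (0:ℝ), ∀ x ∈ Metric.thickening δ A, ∀ t ≥ (0:ℝ),
    Metric.infDist (φ x t) A < ε)

/-- Grönwall-type estimate: along a trajectory staying in `Ω` on `[0, b]`,
`V` decays exponentially toward `1`. -/
lemma gronwall_aux {n : ℕ}
    {f : EuclideanSpace ℝ (Fin n) → EuclideanSpace ℝ (Fin n)}
    {φ : EuclideanSpace ℝ (Fin n) → ℝ → EuclideanSpace ℝ (Fin n)}
    {V : EuclideanSpace ℝ (Fin n) → ℝ} {Ω : Set (EuclideanSpace ℝ (Fin n))}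
    (hφ : IsSolutionMap f φ) (hV : ContDiff ℝ 1 V)
    (hLie : ∀ x ∈ Ω, fderiv ℝ V x (f x) ≤ -(V x - 1))
    (x : EuclideanSpace ℝ (Fin n)) (b : ℝ)
    (hmem : ∀ s ∈ Icc (0:ℝ) b, φ x s ∈ Ω) :
    ∀ t ∈ Icc (0:ℝ) b, V (φ x t) ≤ 1 + (V x - 1) * Real.exp (-t) := by
  set ψ := φ x with hψdef
  have hψc : ContinuousOn ψ (Ici 0) := fun t ht => (hφ.1 x t ht).continuousWithinAt
  set h : ℝ → ℝ := fun s => (V (ψ s) - 1) * Real.exp s with hh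
  have hderiv : ∀ t ∈ Ioo (0:ℝ) b, HasDerivAt h
      (((fderiv ℝ V (ψ t)) (f (ψ t)) * Real.exp t + (V (ψ t) - 1) * Real.exp t)) t := by
    intro t ht
    have hd : HasDerivAt ψ (f (ψ t)) t := (hφ.1 x t ht.1.le).hasDerivAt (Ici_mem_nhds ht.1)
    have hg : HasDerivAt (fun s => V (ψ s)) ((fderiv ℝ V (ψ t)) (f (ψ t))) t :=
      (((hV.differentiable one_ne_zero).differentiableAt).hasFDerivAt).comp_hasDerivAt t hd
    have := ((hg.sub_const 1).mul (Real.hasDerivAt_exp t))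
    exact this
  have hcont : ContinuousOn h (Icc 0 b) := by
    apply ContinuousOn.mul
    · exact ((hV.continuous.comp_continuousOn (hψc.mono (Icc_subset_Ici_self))).sub
        continuousOn_const)
    · exact Real.continuous_exp.continuousOn
  have anti : AntitoneOn h (Icc 0 b) := by
    apply antitoneOn_of_deriv_nonpos (convex_Icc 0 b) hcont
    · rw [interior_Icc]
      intro t ht
      exact (hderiv t ht).differentiableAt.differentiableWithinAt
    · rw [interior_Icc]
      intro t ht
      rw [(hderiv t ht).deriv]
      have hmem' : ψ t ∈ Ω := hmem t ⟨ht.1.le, ht.2.le⟩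
      have := hLie _ hmem'
      nlinarith [Real.exp_pos t]
  intro t ht
  have h0 : (0:ℝ) ∈ Icc (0:ℝ) b := ⟨le_rfl, ht.1.trans ht.2⟩
  have := anti h0 ht ht.1
  have h0val : h 0 = V x - 1 := by
    simp [hh, hψdef, hφ.2.1 x]
  rw [h0val] at this
  have := mul_le_mul_of_nonneg_right this (Real.exp_pos (-t)).le
  rw [mul_assoc, ← Real.exp_add, add_neg_cancel, Real.exp_zero, mul_one] at this
  linarith

lemma decay_bound {a c : ℝ} (hc : 1 ≤ c) (ha : a ≤ c) (t : ℝ) (ht : 0 ≤ t) :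
    1 + (a - 1) * Real.exp (-t) ≤ c := by
  have h1 : Real.exp (-t) ≤ 1 := Real.exp_le_one_iff.mpr (by linarith)
  have h2 : (0:ℝ) < Real.exp (-t) := Real.exp_pos _
  rcases le_or_gt a 1 with h | h
  · nlinarith
  · nlinarith

/-- Forward invariance plus the exponential decay bound. -/
lemma invariance {n : ℕ}
    {f : EuclideanSpace ℝ (Fin n) → EuclideanSpace ℝ (Fin n)}
    {φ : EuclideanSpace ℝ (Fin n) → ℝ → EuclideanSpace ℝ (Fin n)}
    {V : EuclideanSpace ℝ (Fin n) → ℝ} {Ω : Set (EuclideanSpace ℝ (Fin n))}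
    (hφ : IsSolutionMap f φ) (hΩ : IsCompact Ω) (hV : ContDiff ℝ 1 V)
    (hLie : ∀ x ∈ Ω, fderiv ℝ V x (f x) ≤ -(V x - 1))
    (c : ℝ) (hc : 1 ≤ c) (hsubc : {x ∈ Ω | V x ≤ c} ⊆ interior Ω)
    (x : EuclideanSpace ℝ (Fin n)) (hx : x ∈ Ω) (hVx : V x ≤ c) :
    ∀ t ≥ (0:ℝ), φ x t ∈ Ω ∧ V (φ x t) ≤ 1 + (V x - 1) * Real.exp (-t) := by
  set ψ := φ x with hψdef
  have hψc : ∀ t ∈ Ici (0:ℝ), ContinuousWithinAt ψ (Ici 0) t :=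
    fun t ht => (hφ.1 x t ht).continuousWithinAt
  set B : Set (EuclideanSpace ℝ (Fin n)) := {y ∈ Ω | V y ≤ c} with hB
  have hBclosed : IsClosed B := hΩ.isClosed.inter (isClosed_le hV.continuous continuous_const)
  have hxB : x ∈ B := ⟨hx, hVx⟩
  have inv : ∀ t ≥ (0:ℝ), ψ t ∈ B := by
    by_contra hcon
    push_neg at hcon
    obtain ⟨t₀, ht₀, ht₀B⟩ := hcon
    set E : Set ℝ := {t | 0 ≤ t ∧ ψ t ∉ B} with hE
    have hEne : E.Nonempty := ⟨t₀, ht₀, ht₀B⟩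
    have hEbdd : BddBelow E := ⟨0, fun t ht => ht.1⟩
    set u := sInf E with hu
    have hu0 : 0 ≤ u := le_csInf hEne (fun t ht => ht.1)
    have hlt : ∀ s, 0 ≤ s → s < u → ψ s ∈ B := by
      intro s hs hsu
      by_contra hsB
      exact absurd (csInf_le hEbdd ⟨hs, hsB⟩) (not_le.mpr hsu)
    have huB : ψ u ∈ B := by
      rcases eq_or_lt_of_le hu0 with h | h
      · rw [← h]; rw [hψdef, hφ.2.1 x]; exact hxB
      · have hcontat : ContinuousAt ψ u := (hψc u hu0).continuousAt (Ici_mem_nhds h)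
        have htend : Tendsto ψ (𝓝[<] u) (𝓝 (ψ u)) := hcontat.continuousWithinAt.tendsto
        refine hBclosed.mem_of_tendsto htend ?_
        filter_upwards [Ioo_mem_nhdsLT_of_mem (⟨h, le_rfl⟩ : u ∈ Ioc (0:ℝ) u)] with s hs
        exact hlt s hs.1.le hs.2
    have hUint : ψ u ∈ interior Ω := hsubc huB
    have hev : {s | ψ s ∈ Ω} ∈ 𝓝[≥] u := by
      have h1 : ψ ⁻¹' (interior Ω) ∈ 𝓝[Ici 0] u :=
        (hψc u hu0).preimage_mem_nhdsWithin (isOpen_interior.mem_nhds hUint)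
      have h2 : 𝓝[Ici u] u ≤ 𝓝[Ici 0] u := nhdsWithin_mono u (Ici_subset_Ici.mpr hu0)
      exact mem_of_superset (h2 h1)
        (fun s (hs : ψ s ∈ interior Ω) => (interior_subset hs : ψ s ∈ Ω))
    obtain ⟨u', huu', hIcc⟩ := mem_nhdsGE_iff_exists_Icc_subset.mp hev
    have hallΩ : ∀ s ∈ Icc (0:ℝ) u', ψ s ∈ Ω := by
      intro s hs
      rcases lt_or_ge s u with h | h
      · exact (hlt s hs.1 h).1
      · exact hIcc ⟨h, hs.2⟩
    have hgron := gronwall_aux hφ hV hLie x u' hallΩ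
    have hallB : ∀ s ∈ Icc (0:ℝ) u', ψ s ∈ B := by
      intro s hs
      refine ⟨hallΩ s hs, ?_⟩
      calc V (ψ s) ≤ 1 + (V x - 1) * Real.exp (-s) := hgron s hs
        _ ≤ c := decay_bound hc hVx s hs.1
    obtain ⟨e, heE, heu'⟩ := exists_lt_of_csInf_lt hEne (lt_of_le_of_lt (le_refl u) huu')
    exact heE.2 (hallB e ⟨heE.1, heu'.le⟩)
  intro t ht
  refine ⟨(inv t ht).1, ?_⟩
  exact gronwall_aux hφ hV hLie x t (fun s hs => (inv s hs.1).1) t ⟨ht, le_rfl⟩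

/-- Prop. 4 of the paper. -/
theorem sublevel_is_attractor {n : ℕ}
    (f : EuclideanSpace ℝ (Fin n) → EuclideanSpace ℝ (Fin n))
    (φ : EuclideanSpace ℝ (Fin n) → ℝ → EuclideanSpace ℝ (Fin n))
    (V : EuclideanSpace ℝ (Fin n) → ℝ) (Ω : Set (EuclideanSpace ℝ (Fin n)))
    (hf : ContDiff ℝ 1 f) (hφ : IsSolutionMap f φ)
    (hΩ : IsCompact Ω)
    (hV : ContDiff ℝ 1 V) (hVnonneg : ∀ x, 0 ≤ V x)
    (hLie : ∀ x ∈ Ω, fderiv ℝ V x (f x) ≤ -(V x - 1))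
    (hsub : {x ∈ Ω | V x ≤ 1} ⊆ interior Ω)
    (hne : {x ∈ Ω | V x ≤ 1}.Nonempty) :
    IsAttractor φ {x ∈ Ω | V x ≤ 1} := by
  set A : Set (EuclideanSpace ℝ (Fin n)) := {x ∈ Ω | V x ≤ 1} with hA
  have hAclosed : IsClosed A := hΩ.isClosed.inter (isClosed_le hV.continuous continuous_const)
  have hAcomp : IsCompact A := hΩ.of_isClosed_subset hAclosed (sep_subset _ _)
  -- find η > 0 with the (1+η)-sublevel set still inside the interior of Ω
  obtain ⟨η, hη0, hηsub⟩ : ∃ η > (0:ℝ), {x ∈ Ω | V x ≤ 1 + η} ⊆ interior Ω := by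
    have hFcomp : IsCompact (Ω \ interior Ω) := hΩ.diff isOpen_interior
    rcases (Ω \ interior Ω).eq_empty_or_nonempty with hF | hF
    · refine ⟨1, one_pos, fun y hy => ?_⟩
      by_contra hyint
      have : y ∈ Ω \ interior Ω := ⟨hy.1, hyint⟩
      rw [hF] at this
      exact this
    · obtain ⟨x₀, hx₀F, hmin⟩ := hFcomp.exists_isMinOn hF hV.continuous.continuousOn
      have hx₀gt : 1 < V x₀ := by
        by_contra hle
        push_neg at hle
        exact hx₀F.2 (hsub ⟨hx₀F.1, hle⟩)
      refine ⟨(V x₀ - 1) / 2, by linarith, fun y hy => ?_⟩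
      by_contra hyint
      have h1 : V x₀ ≤ V y := hmin ⟨hy.1, hyint⟩
      have h2 := hy.2
      linarith
  -- for every ε > 0, a κ such that points of Ω with V ≤ 1 + κ are ε-close to A
  have hκex : ∀ ε > (0:ℝ), ∃ κ, 0 < κ ∧ κ ≤ η ∧
      ∀ y ∈ Ω, V y ≤ 1 + κ → infDist y A < ε := by
    intro ε hε
    set K : Set (EuclideanSpace ℝ (Fin n)) := {y ∈ Ω | ε ≤ infDist y A} with hK
    have hKcomp : IsCompact K :=
      hΩ.of_isClosed_subset
        (hΩ.isClosed.inter (isClosed_le continuous_const (continuous_infDist_pt A)))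
        (sep_subset _ _)
    rcases K.eq_empty_or_nonempty with hKe | hKne
    · refine ⟨η, hη0, le_rfl, fun y hy hVy => ?_⟩
      by_contra hc
      push_neg at hc
      have : y ∈ K := ⟨hy, hc⟩
      rw [hKe] at this
      exact this
    · obtain ⟨y₀, hy₀K, hmin⟩ := hKcomp.exists_isMinOn hKne hV.continuous.continuousOn
      have h1 : 1 < V y₀ := by
        by_contra hle
        push_neg at hle
        have hmem : y₀ ∈ A := ⟨hy₀K.1, hle⟩
        have h0 : infDist y₀ A = 0 := infDist_zero_of_mem hmem
        have := hy₀K.2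
        linarith
      refine ⟨min η ((V y₀ - 1) / 2), lt_min hη0 (by linarith), min_le_left _ _,
        fun y hy hVy => ?_⟩
      by_contra hc
      push_neg at hc
      have h2 : V y₀ ≤ V y := hmin ⟨hy, hc⟩
      have h3 : min η ((V y₀ - 1) / 2) ≤ (V y₀ - 1) / 2 := min_le_right _ _
      linarith
  refine ⟨hAcomp, hne, ?_, ?_, ?_⟩
  · -- forward invariance of A
    intro x hx t ht
    have hinv := invariance hφ hΩ hV hLie 1 le_rfl hsub x hx.1 hx.2 t ht
    exact ⟨hinv.1, hinv.2.trans (decay_bound le_rfl hx.2 t ht)⟩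
  · -- local attraction
    intro x hx
    have hUopen : IsOpen (interior Ω ∩ {y | V y < 1 + η}) :=
      isOpen_interior.inter (isOpen_lt hV.continuous continuous_const)
    have hxU : x ∈ interior Ω ∩ {y | V y < 1 + η} :=
      ⟨hsub hx, by have := hx.2; simp only [mem_setOf_eq]; linarith⟩
    obtain ⟨δ, hδ0, hball⟩ := Metric.isOpen_iff.mp hUopen x hxU
    refine ⟨δ, hδ0, ?_⟩
    intro ε hε
    obtain ⟨κ, hκ0, hκη, hκprop⟩ := hκex ε hε
    refine ⟨max 0 (Real.log (η / κ)), le_max_left _ _, ?_⟩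
    intro y hy t htT
    have ht0 : 0 ≤ t := le_trans (le_max_left _ _) htT
    have hyU := hball hy
    have hyΩ : y ∈ Ω := interior_subset hyU.1
    have hyV : V y ≤ 1 + η := le_of_lt hyU.2
    have hinv := invariance hφ hΩ hV hLie (1 + η) (by linarith) hηsub y hyΩ hyV t ht0
    apply hκprop _ hinv.1
    have hexp : Real.exp (-t) ≤ κ / η := by
      have hlog : Real.log (η / κ) ≤ t := le_trans (le_max_right _ _) htT
      have h1 : Real.exp (-t) ≤ Real.exp (-(Real.log (η / κ))) :=
        Real.exp_le_exp.mpr (by linarith)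
      have h2 : Real.exp (-(Real.log (η / κ))) = κ / η := by
        rw [Real.exp_neg (Real.log (η / κ)), Real.exp_log (div_pos hη0 hκ0), inv_div]
      rw [h2] at h1
      exact h1
    have hVb := hinv.2
    have hkey : (V y - 1) * Real.exp (-t) ≤ κ := by
      rcases le_or_gt (V y) 1 with h | h
      · have := Real.exp_pos (-t)
        nlinarith
      · calc (V y - 1) * Real.exp (-t) ≤ η * (κ / η) := by
              apply mul_le_mul (by linarith) hexp (Real.exp_pos _).le (by linarith)
          _ = κ := by field_simp
    linarith
  · -- stability
    intro ε hε
    obtain ⟨κ, hκ0, hκη, hκprop⟩ := hκex ε hε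
    have hsubκ : {x ∈ Ω | V x ≤ 1 + κ} ⊆ interior Ω :=
      fun y hy => hηsub ⟨hy.1, hy.2.trans (by linarith)⟩
    have hUopen : IsOpen (interior Ω ∩ {y | V y < 1 + κ}) :=
      isOpen_interior.inter (isOpen_lt hV.continuous continuous_const)
    have hAU : A ⊆ interior Ω ∩ {y | V y < 1 + κ} :=
      fun y hy => ⟨hsub hy, by have := hy.2; simp only [mem_setOf_eq]; linarith⟩
    obtain ⟨δ, hδ0, hthick⟩ := hAcomp.exists_thickening_subset_open hUopen hAU
    refine ⟨δ, hδ0, ?_⟩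
    intro x hx t ht
    have hxU := hthick hx
    have hxΩ : x ∈ Ω := interior_subset hxU.1
    have hxV : V x ≤ 1 + κ := le_of_lt hxU.2
    have hinv := invariance hφ hΩ hV hLie (1 + κ) (by linarith) hsubκ x hxΩ hxV t ht
    apply hκprop _ hinv.1
    exact hinv.2.trans (decay_bound (by linarith) hxV t ht)
end
end

section
/- Let f : ℝⁿ → ℝⁿ be locally Lipschitz with solution map φ of the ODE ẋ = f(x), let Ω ⊂ ℝⁿ be compact, and let V : ℝⁿ → [0,∞) be continuously differentiable with ∇V(x)ᵀ f(x) ≤ −(V(x) − 1) for all x ∈ Ω. For a ≥ 0 define S_a := {x ∈ Ω : V(x) ≤ 1 + a}. If S_a ⊆ Ω° (the interior of Ω), then S_a is forward invariant: φ(x,t) ∈ S_a for all x ∈ S_a and all t ≥ 0. -/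
open Set Filter MeasureTheory Metric Topology

noncomputable section

/-- under the Lyapunov inequality `∇V(x)ᵀ f(x) ≤ −(V(x) − 1)` on a compact
set `Ω`, any sublevel set `S_a = {x ∈ Ω : V(x) ≤ 1 + a}` (`a ≥ 0`) contained in the interior
of `Ω` is forward invariant under the solution map. -/
theorem sublevel_forward_invariant {n : ℕ}
    (f : EuclideanSpace ℝ (Fin n) → EuclideanSpace ℝ (Fin n))
    (φ : EuclideanSpace ℝ (Fin n) → ℝ → EuclideanSpace ℝ (Fin n))
    (V : EuclideanSpace ℝ (Fin n) → ℝ) (Ω : Set (EuclideanSpace ℝ (Fin n))) (a : ℝ)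
    (hf : LocallyLipschitz f) (hφ : IsSolutionMap f φ)
    (hΩ : IsCompact Ω)
    (hV : ContDiff ℝ 1 V) (hVnonneg : ∀ x, 0 ≤ V x)
    (hLie : ∀ x ∈ Ω, fderiv ℝ V x (f x) ≤ -(V x - 1))
    (ha : 0 ≤ a)
    (hsub : {x ∈ Ω | V x ≤ 1 + a} ⊆ interior Ω) :
    ∀ x ∈ {x ∈ Ω | V x ≤ 1 + a}, ∀ t ≥ (0:ℝ), φ x t ∈ {x ∈ Ω | V x ≤ 1 + a} := by
  obtain ⟨hd, h0, -⟩ := hφ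
  intro x hx t ht
  set S := {x ∈ Ω | V x ≤ 1 + a} with hS
  have hcont : ContinuousOn (φ x) (Ici 0) := fun s hs =>
    (hd x s hs).continuousWithinAt
  -- Gronwall: if the trajectory stays in Ω on [0,b], then V ≤ 1+a on [0,b]
  have barrier : ∀ b : ℝ, (∀ s ∈ Icc (0:ℝ) b, φ x s ∈ Ω) →
      ∀ s ∈ Icc (0:ℝ) b, V (φ x s) ≤ 1 + a := by
    intro b hb s hs
    have hg' : ∀ u ∈ Ico (0:ℝ) b,
        HasDerivWithinAt (fun s => V (φ x s) - 1)
          (fderiv ℝ V (φ x u) (f (φ x u))) (Ici u) u := by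
      intro u hu
      have h1 : HasDerivWithinAt (φ x) (f (φ x u)) (Ici u) u :=
        (hd x u hu.1).mono (Ici_subset_Ici.2 hu.1)
      exact ((hV.differentiable one_ne_zero (φ x u)).hasFDerivAt.comp_hasDerivWithinAt u h1).sub_const 1
    have hgc : ContinuousOn (fun s => V (φ x s) - 1) (Icc 0 b) :=
      (hV.continuous.comp_continuousOn (hcont.mono Icc_subset_Ici_self)).sub continuousOn_const
    have key := le_gronwallBound_of_liminf_deriv_right_le (f' := fun u =>
        fderiv ℝ V (φ x u) (f (φ x u))) (δ := a) (K := -1) (ε := 0) hgc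
      (fun u hu r hr => (hg' u hu).liminf_right_slope_le hr)
      (by simp only [h0 x]; linarith [hx.2])
      (fun u hu => by
        have := hLie (φ x u) (hb u ⟨hu.1, hu.2.le⟩)
        nlinarith [this])
      s hs
    have heq : gronwallBound a (-1) 0 (s - 0) = a * Real.exp (-s) := by
      rw [gronwallBound_ε0]; ring_nf
    rw [heq] at key
    have hexp : a * Real.exp (-s) ≤ a * 1 :=
      mul_le_mul_of_nonneg_left (Real.exp_le_one_iff.2 (by linarith [hs.1])) ha
    linarith
  have hSclosed : IsClosed S :=
    hΩ.isClosed.inter (isClosed_le hV.continuous continuous_const)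
  set A : Set ℝ := {u | u ∈ Icc 0 t ∧ ∀ s ∈ Icc (0:ℝ) u, φ x s ∈ S} with hA
  have h0A : (0:ℝ) ∈ A := by
    refine ⟨⟨le_refl _, ht⟩, fun s hs => ?_⟩
    have : s = 0 := le_antisymm hs.2 hs.1
    rw [this, h0 x]; exact hx
  have hAbdd : BddAbove A := ⟨t, fun u hu => hu.1.2⟩
  set c := sSup A with hc
  have hc0 : 0 ≤ c := le_csSup hAbdd h0A
  have hct : c ≤ t := csSup_le ⟨0, h0A⟩ fun u hu => hu.1.2
  have hbefore : ∀ s ∈ Ico (0:ℝ) c, φ x s ∈ S := by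
    intro s hs
    obtain ⟨u, huA, hsu⟩ := exists_lt_of_lt_csSup ⟨0, h0A⟩ hs.2
    exact huA.2 s ⟨hs.1, hsu.le⟩
  have hcS : φ x c ∈ S := by
    rcases eq_or_lt_of_le hc0 with h | h
    · rw [← h, h0 x]; exact hx
    · have htend : Tendsto (φ x) (𝓝[Ico 0 c] c) (𝓝 (φ x c)) :=
        (hcont c hc0).mono Ico_subset_Ici_self
      have hne : (𝓝[Ico (0:ℝ) c] c).NeBot := by
        rw [nhdsWithin_Ico_eq_nhdsLT h]; infer_instance
      exact hSclosed.mem_of_tendsto htend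
        (eventually_mem_nhdsWithin.mono fun s hs => hbefore s hs)
  have hcA : c ∈ A := by
    refine ⟨⟨hc0, hct⟩, fun s hs => ?_⟩
    rcases eq_or_lt_of_le hs.2 with h | h
    · rw [h]; exact hcS
    · exact hbefore s ⟨hs.1, h⟩
  have hceq : c = t := by
    by_contra hne
    have hclt : c < t := lt_of_le_of_ne hct hne
    -- φ x c ∈ interior Ω, so the trajectory stays in Ω slightly past c
    have hmem : {s : ℝ | φ x s ∈ interior Ω} ∈ 𝓝[≥] c := by
      have : Tendsto (φ x) (𝓝[≥] c) (𝓝 (φ x c)) :=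
        (hcont c hc0).mono (Ici_subset_Ici.2 hc0)
      exact this (isOpen_interior.mem_nhds (hsub hcS))
    obtain ⟨b', hb'c, hb'⟩ := mem_nhdsGE_iff_exists_Icc_subset.1 hmem
    set b := min b' t with hb
    have hcb : c < b := lt_min hb'c hclt
    have hbt : b ≤ t := min_le_right _ _
    have hΩall : ∀ s ∈ Icc (0:ℝ) b, φ x s ∈ Ω := by
      intro s hs
      rcases le_or_gt s c with h | h
      · exact (hcA.2 s ⟨hs.1, h⟩).1
      · exact interior_subset (hb' ⟨h.le, hs.2.trans (min_le_left _ _)⟩)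
    have hbA : b ∈ A := by
      refine ⟨⟨hc0.trans hcb.le, hbt⟩, fun s hs => ?_⟩
      exact ⟨hΩall s hs, barrier b hΩall s hs⟩
    exact absurd (le_csSup hAbdd hbA) (not_le.2 hcb)
  exact hcA.2 t ⟨ht, hceq.ge⟩
end
end

section
/- Let f : ℝⁿ → ℝⁿ be locally Lipschitz with solution map φ of the ODE ẋ = f(x), let Ω ⊂ ℝⁿ be compact, and let V : ℝⁿ → [0,∞) be continuously differentiable satisfying ∇V(x)ᵀ f(x) ≤ −(V(x) − 1) for all x ∈ Ω, {x ∈ Ω : V(x) ≤ 1} ⊆ Ω°, and {x ∈ Ω : V(x) ≤ 1} ≠ ∅. Then for any a > 0 such that {x ∈ Ω : V(x) ≤ 1 + a} ⊆ Ω°, one has {x ∈ Ω : V(x) ≤ 1 + a} ⊆ BOA_f({x ∈ Ω : V(x) ≤ 1}); that is, every x with x ∈ Ω and V(x) ≤ 1 + a satisfies lim_{t→∞} D(φ(x,t), {y ∈ Ω : V(y) ≤ 1}) = 0. -/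
open Set Filter MeasureTheory Metric Topology

noncomputable section

/-- Cor. 5 of the paper: under the Lyapunov conditions of Prop. 4, every
sublevel set `{x ∈ Ω : V(x) ≤ 1 + a}` (`a > 0`) contained in the interior of `Ω` lies in the
basin of attraction of the attractor set `{x ∈ Ω : V(x) ≤ 1}`. -/
theorem sublevel_subset_basin_of_attraction {n : ℕ}
    (f : EuclideanSpace ℝ (Fin n) → EuclideanSpace ℝ (Fin n))
    (φ : EuclideanSpace ℝ (Fin n) → ℝ → EuclideanSpace ℝ (Fin n))
    (V : EuclideanSpace ℝ (Fin n) → ℝ) (Ω : Set (EuclideanSpace ℝ (Fin n))) (a : ℝ)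
    (hf : LocallyLipschitz f) (hφ : IsSolutionMap f φ)
    (hΩ : IsCompact Ω)
    (hV : ContDiff ℝ 1 V) (hVnonneg : ∀ x, 0 ≤ V x)
    (hLie : ∀ x ∈ Ω, fderiv ℝ V x (f x) ≤ -(V x - 1))
    (hsub1 : {x ∈ Ω | V x ≤ 1} ⊆ interior Ω)
    (hne : {x ∈ Ω | V x ≤ 1}.Nonempty)
    (ha : 0 < a)
    (hsuba : {x ∈ Ω | V x ≤ 1 + a} ⊆ interior Ω) :
    ∀ x ∈ {x ∈ Ω | V x ≤ 1 + a},
      Filter.Tendsto (fun t => Metric.infDist (φ x t) {y ∈ Ω | V y ≤ 1})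
        Filter.atTop (nhds 0) := by
  obtain ⟨hderiv, hinit, hsemi⟩ := hφ
  intro x hx
  obtain ⟨hxΩ, hxV⟩ := hx
  set A : Set (EuclideanSpace ℝ (Fin n)) := {y ∈ Ω | V y ≤ 1} with hAdef
  have hΩclosed : IsClosed Ω := hΩ.isClosed
  have hcont : ContinuousOn (φ x) (Ici 0) := fun t ht => (hderiv x t ht).continuousWithinAt
  have hVd : Differentiable ℝ V := hV.differentiable one_ne_zero
  set g : ℝ → ℝ := fun t => V (φ x t) with hgdef
  set w : ℝ → ℝ := fun t => (g t - 1) * Real.exp t with hwdef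
  have hgderiv : ∀ t ≥ (0:ℝ), HasDerivWithinAt g (fderiv ℝ V (φ x t) (f (φ x t))) (Ici 0) t :=
    fun t ht => ((hVd (φ x t)).hasFDerivAt).comp_hasDerivWithinAt t (hderiv x t ht)
  have hwderiv : ∀ t ≥ (0:ℝ), HasDerivWithinAt w
      ((fderiv ℝ V (φ x t) (f (φ x t)) + (g t - 1)) * Real.exp t) (Ici 0) t := by
    intro t ht
    have h1 := ((hgderiv t ht).sub_const 1).mul (Real.hasDerivAt_exp t).hasDerivWithinAt
    exact h1.congr_deriv (by ring)
  have hwcont : ContinuousOn w (Ici 0) :=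
    (((hV.continuous.comp_continuousOn hcont).sub continuousOn_const).mul
      Real.continuous_exp.continuousOn)
  -- The invariance / Lyapunov decrease claim
  set C : Set ℝ := {s | 0 ≤ s ∧ φ x s ∈ Ω ∧ w s ≤ a} with hCdef
  have key : ∀ t ≥ (0:ℝ), φ x t ∈ Ω ∧ w t ≤ a := by
    intro b hb
    have hsubC : Icc 0 b ⊆ C := by
      apply IsClosed.Icc_subset_of_forall_exists_gt
      · -- closedness of C ∩ Icc 0 b
        have : C ∩ Icc 0 b =
            (Icc 0 b ∩ (φ x) ⁻¹' Ω) ∩ (Icc 0 b ∩ w ⁻¹' (Iic a)) := by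
          ext s
          simp only [hCdef, mem_inter_iff, mem_setOf_eq, mem_Icc, mem_preimage, mem_Iic]
          constructor
          · rintro ⟨⟨h1, h2, h3⟩, h4, h5⟩; exact ⟨⟨⟨h4, h5⟩, h2⟩, ⟨h4, h5⟩, h3⟩
          · rintro ⟨⟨⟨h4, h5⟩, h2⟩, _, h3⟩; exact ⟨⟨h4, h2, h3⟩, h4, h5⟩
        rw [this]
        exact ((hcont.mono Icc_subset_Ici_self).preimage_isClosed_of_isClosed
            isClosed_Icc hΩclosed).inter
          ((hwcont.mono Icc_subset_Ici_self).preimage_isClosed_of_isClosed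
            isClosed_Icc isClosed_Iic)
      · refine ⟨le_refl 0, ?_, ?_⟩
        · rw [hinit x]; exact hxΩ
        · simp only [hwdef, hgdef, hinit x, Real.exp_zero, mul_one]
          linarith
      · rintro t ⟨⟨ht0, htΩ, htw⟩, _⟩ y hy
        -- φ x t is in the interior of Ω
        have hexp : (0:ℝ) < Real.exp t := Real.exp_pos t
        have hexp1 : (1:ℝ) ≤ Real.exp t := Real.one_le_exp ht0
        have hgt1 : g t ≤ 1 + a := by
          have : (g t - 1) * Real.exp t ≤ a := htw
          nlinarith
        have hint : φ x t ∈ interior Ω := hsuba ⟨htΩ, hgt1⟩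
        -- find u > t with the trajectory staying in Ω on [t, u]
        have hmem : (φ x) ⁻¹' Ω ∈ 𝓝[≥] t := by
          have h1 : (φ x) ⁻¹' (interior Ω) ∈ 𝓝[Ici 0] t :=
            (hcont t ht0) (isOpen_interior.mem_nhds hint)
          have h2 : (φ x) ⁻¹' (interior Ω) ∈ 𝓝[≥] t :=
            nhdsWithin_mono t (Ici_subset_Ici.mpr ht0) h1
          exact Filter.mem_of_superset h2 (preimage_mono interior_subset)
        obtain ⟨u, hu, huIcc⟩ := mem_nhdsGE_iff_exists_Icc_subset.mp hmem
        -- w is antitone on Icc t u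
        have hanti : AntitoneOn w (Icc t u) := by
          apply antitoneOn_of_deriv_nonpos (convex_Icc t u)
          · exact hwcont.mono (fun s hs => le_trans ht0 hs.1)
          · intro s hs
            rw [interior_Icc] at hs
            have hs0 : (0:ℝ) < s := lt_of_le_of_lt ht0 hs.1
            exact ((hwderiv s hs0.le).hasDerivAt
              (Ici_mem_nhds hs0)).differentiableAt.differentiableWithinAt
          · intro s hs
            rw [interior_Icc] at hs
            have hs0 : (0:ℝ) < s := lt_of_le_of_lt ht0 hs.1
            have hda : HasDerivAt w
                ((fderiv ℝ V (φ x s) (f (φ x s)) + (g s - 1)) * Real.exp s) s :=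
              (hwderiv s hs0.le).hasDerivAt (Ici_mem_nhds hs0)
            rw [hda.deriv]
            have hsΩ : φ x s ∈ Ω := huIcc ⟨hs.1.le, hs.2.le⟩
            have hlie := hLie (φ x s) hsΩ
            have : fderiv ℝ V (φ x s) (f (φ x s)) + (g s - 1) ≤ 0 := by
              simp only [hgdef]; linarith
            exact mul_nonpos_iff.mpr (Or.inr ⟨this, (Real.exp_pos s).le⟩)
        refine ⟨min y u, ⟨?_, ?_, ?_⟩, ?_, min_le_left y u⟩
        · exact le_trans ht0 (le_min hy.le (mem_Ioi.mp hu).le)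
        · exact huIcc ⟨le_min hy.le (mem_Ioi.mp hu).le, min_le_right y u⟩
        · calc w (min y u) ≤ w t := hanti (left_mem_Icc.mpr (mem_Ioi.mp hu).le)
                ⟨le_min hy.le (mem_Ioi.mp hu).le, min_le_right y u⟩
                (le_min hy.le (mem_Ioi.mp hu).le)
            _ ≤ a := htw
        · exact lt_min hy hu
    have := hsubC ⟨hb, le_refl b⟩
    exact ⟨this.2.1, this.2.2⟩
  -- From w t ≤ a: V (φ x t) ≤ 1 + a * exp (-t)
  have hVbound : ∀ t ≥ (0:ℝ), V (φ x t) ≤ 1 + a * Real.exp (-t) := by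
    intro t ht
    have hw := (key t ht).2
    have hexp : (0:ℝ) < Real.exp t := Real.exp_pos t
    have hne' : Real.exp (-t) = (Real.exp t)⁻¹ := Real.exp_neg t
    rw [hne']
    have : (V (φ x t) - 1) * Real.exp t ≤ a := hw
    rw [← sub_nonneg]
    have h2 : 1 + a * (Real.exp t)⁻¹ - V (φ x t)
        = (a - (V (φ x t) - 1) * Real.exp t) * (Real.exp t)⁻¹ := by
      field_simp
      ring
    rw [h2]
    exact mul_nonneg (by linarith) (inv_nonneg.mpr hexp.le)
  -- compactness: small sublevel sets are close to A
  have hδ : ∀ ε > (0:ℝ), ∃ δ > (0:ℝ), ∀ y ∈ Ω, V y ≤ 1 + δ → Metric.infDist y A < ε := by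
    intro ε hε
    set B : Set (EuclideanSpace ℝ (Fin n)) := Ω ∩ (fun y => Metric.infDist y A) ⁻¹' (Ici ε)
      with hBdef
    have hBcl : IsClosed B := hΩclosed.inter
      (isClosed_Ici.preimage (continuous_infDist_pt A))
    have hBcp : IsCompact B := hΩ.inter_right (isClosed_Ici.preimage (continuous_infDist_pt A))
    by_cases hB : B.Nonempty
    · obtain ⟨y0, hy0B, hy0min⟩ := hBcp.exists_isMinOn hB hV.continuous.continuousOn
      have hy0 : 1 < V y0 := by
        by_contra h
        push_neg at h
        have : y0 ∈ A := ⟨hy0B.1, h⟩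
        have := Metric.infDist_zero_of_mem this
        have := hy0B.2
        simp only [mem_preimage, mem_Ici] at this
        linarith
      refine ⟨(V y0 - 1) / 2, by linarith, ?_⟩
      intro y hy hVy
      by_contra h
      push_neg at h
      have hyB : y ∈ B := ⟨hy, h⟩
      have := hy0min hyB
      simp only [mem_setOf_eq] at this
      linarith
    · refine ⟨1, one_pos, ?_⟩
      intro y hy _
      by_contra h
      push_neg at h
      exact hB ⟨y, hy, h⟩
  -- conclude
  rw [Metric.tendsto_atTop]
  intro ε hε
  obtain ⟨δ, hδpos, hδ'⟩ := hδ ε hε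
  have htend : Tendsto (fun t : ℝ => a * Real.exp (-t)) atTop (𝓝 (a * 0)) :=
    (Real.tendsto_exp_atBot.comp tendsto_neg_atTop_atBot).const_mul a
  rw [mul_zero] at htend
  have hev : ∀ᶠ t in atTop, a * Real.exp (-t) < δ := htend.eventually_lt_const hδpos
  obtain ⟨N, hN⟩ := eventually_atTop.mp hev
  refine ⟨max N 0, fun t ht => ?_⟩
  have ht0 : (0:ℝ) ≤ t := le_trans (le_max_right N 0) ht
  have htN : N ≤ t := le_trans (le_max_left N 0) ht
  have h1 : φ x t ∈ Ω := (key t ht0).1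
  have h2 : V (φ x t) ≤ 1 + δ := le_trans (hVbound t ht0) (by linarith [hN t htN])
  have h3 : Metric.infDist (φ x t) A < ε := hδ' (φ x t) h1 h2
  rw [Real.dist_eq, sub_zero, abs_of_nonneg Metric.infDist_nonneg]
  exact h3
end
end

section
/- Let f : ℝⁿ → ℝⁿ be continuously differentiable with solution map φ of the ODE ẋ = f(x). Suppose A ⊂ ℝⁿ is a stable compact attractor set of the ODE, Ω ⊂ ℝⁿ is compact with A ⊆ Ω, and V : ℝⁿ → [0,∞) is continuously differentiable with ∇V(x)ᵀ f(x) ≤ −(V(x) − 1) for all x ∈ Ω. Then {x ∈ Ω : V(x) ≤ 1} ≠ ∅ (in fact A ∩ {x ∈ Ω : V(x) ≤ 1} ≠ ∅). -/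
open Set Filter MeasureTheory Metric Topology

noncomputable section

/-- Lem. 9 of the paper: if `A` is a stable compact attractor set contained
in a compact set `Ω` and `V` is a nonnegative `C¹` function with `∇V(x)ᵀ f(x) ≤ −(V(x) − 1)`
on `Ω`, then `{x ∈ Ω : V(x) ≤ 1}` is nonempty; in fact `A ∩ {x ∈ Ω : V(x) ≤ 1} ≠ ∅`. -/
theorem sublevel_nonempty {n : ℕ}
    (f : EuclideanSpace ℝ (Fin n) → EuclideanSpace ℝ (Fin n))
    (φ : EuclideanSpace ℝ (Fin n) → ℝ → EuclideanSpace ℝ (Fin n))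
    (V : EuclideanSpace ℝ (Fin n) → ℝ)
    (A Ω : Set (EuclideanSpace ℝ (Fin n)))
    (hf : ContDiff ℝ 1 f) (hφ : IsSolutionMap f φ)
    (hA : IsAttractor φ A)
    (hΩ : IsCompact Ω)
    (hV : ContDiff ℝ 1 V) (hVnonneg : ∀ x, 0 ≤ V x)
    (hLie : ∀ x ∈ Ω, fderiv ℝ V x (f x) ≤ -(V x - 1))
    (hAΩ : A ⊆ Ω) :
    {x ∈ Ω | V x ≤ 1}.Nonempty ∧ (A ∩ {x ∈ Ω | V x ≤ 1}).Nonempty := by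
  obtain ⟨hAc, hAne, hinv, -, -⟩ := hA
  obtain ⟨x, hxA, hmin⟩ := hAc.exists_isMinOn hAne (hV.continuous.continuousOn)
  suffices h : x ∈ A ∩ {x ∈ Ω | V x ≤ 1} by
    exact ⟨⟨x, h.2⟩, ⟨x, h⟩⟩
  refine ⟨hxA, hAΩ hxA, ?_⟩
  by_contra hV1
  push_neg at hV1
  -- derivative of t ↦ V (φ x t) at 0 within [0,∞)
  have hφd : HasDerivWithinAt (φ x) (f x) (Set.Ici 0) 0 := by
    have := hφ.1 x 0 le_rfl
    rwa [hφ.2.1 x] at this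
  have hVd : HasFDerivAt V (fderiv ℝ V x) (φ x 0) := by
    rw [hφ.2.1 x]; exact (hV.differentiable one_ne_zero x).hasFDerivAt
  have hg : HasDerivWithinAt (fun t => V (φ x t)) (fderiv ℝ V x (f x)) (Set.Ici 0) 0 :=
    hVd.comp_hasDerivWithinAt 0 hφd
  have hc : fderiv ℝ V x (f x) < 0 := by
    have := hLie x (hAΩ hxA)
    linarith
  rw [hasDerivWithinAt_iff_tendsto_slope] at hg
  have hne : (𝓝[Set.Ici (0:ℝ) \ {0}] 0).NeBot := by
    rw [show Set.Ici (0:ℝ) \ {0} = Set.Ioi 0 by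
      ext t; simp [Set.mem_diff, lt_iff_le_and_ne, eq_comm]]
    exact nhdsGT_neBot 0
  have hev : ∀ᶠ t in 𝓝[Set.Ici (0:ℝ) \ {0}] 0, slope (fun t => V (φ x t)) 0 t < 0 :=
    hg.eventually (Filter.Tendsto.eventually_lt_const hc tendsto_id |>.mono fun _ h => h)
  obtain ⟨t, hslope, ht0, htne⟩ := (hev.and (eventually_mem_nhdsWithin)).exists
  have htpos : 0 < t := lt_of_le_of_ne ht0 (Ne.symm htne)
  have : V (φ x t) < V x := by
    have := hslope
    rw [slope_def_field] at this
    have h2 : (V (φ x t) - V (φ x 0)) / (t - 0) < 0 := by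
      simpa [div_eq_inv_mul] using this
    rw [hφ.2.1 x, sub_zero] at h2
    rcases div_neg_iff.mp h2 with ⟨-, h⟩ | ⟨h, -⟩ <;> linarith
  exact absurd (hmin (hinv x hxA t htpos.le)) (by simp; linarith)
end
end

section
/- Let f : ℝⁿ → ℝⁿ be continuously differentiable with solution map φ of the ODE ẋ = f(x). Suppose A* ⊂ ℝⁿ is the minimal attractor set of the ODE, V : ℝⁿ → [0,∞) is continuously differentiable, σ > 0, and Ω ⊂ ℝⁿ is a compact set such that ∇V(x)ᵀ f(x) ≤ −(V(x) − 1) for all x ∈ Ω and B(A*,σ) ⊆ Ω. Then A* ⊆ {x ∈ Ω : V(x) ≤ 1}. -/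
open Set Filter MeasureTheory Metric Topology

noncomputable section

/-- `A` is a minimal attractor set: it is an attractor set and no attractor set is
strictly contained in it. -/
def IsMinimalAttractor {n : ℕ} (φ : EuclideanSpace ℝ (Fin n) → ℝ → EuclideanSpace ℝ (Fin n))
    (A : Set (EuclideanSpace ℝ (Fin n))) : Prop :=
  IsAttractor φ A ∧ ∀ B, IsAttractor φ B → ¬ B ⊂ A

lemma exp_small (M ε : ℝ) (hε : 0 < ε) : ∃ T ≥ (0:ℝ), ∀ t ≥ T, M * Real.exp (-t) < ε := by
  rcases le_or_gt M 0 with hM | hM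
  · exact ⟨0, le_rfl, fun t _ => lt_of_le_of_lt
      (mul_nonpos_of_nonpos_of_nonneg hM (Real.exp_pos _).le) hε⟩
  · have h : Tendsto (fun t : ℝ => M * Real.exp (-t)) atTop (nhds 0) := by
      simpa using (Real.tendsto_exp_neg_atTop_nhds_zero.const_mul M)
    obtain ⟨T, hT⟩ := (h.eventually (eventually_lt_nhds hε)).exists_forall_of_atTop
    exact ⟨max T 0, le_max_right _ _, fun t ht => hT t ((le_max_left T 0).trans ht)⟩

lemma decay_lemma {n : ℕ}
    {f : EuclideanSpace ℝ (Fin n) → EuclideanSpace ℝ (Fin n)}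
    {φ : EuclideanSpace ℝ (Fin n) → ℝ → EuclideanSpace ℝ (Fin n)}
    {V : EuclideanSpace ℝ (Fin n) → ℝ} {Ω : Set (EuclideanSpace ℝ (Fin n))}
    (hφ : IsSolutionMap f φ) (hV : ContDiff ℝ 1 V)
    (hLie : ∀ x ∈ Ω, fderiv ℝ V x (f x) ≤ -(V x - 1))
    (x : EuclideanSpace ℝ (Fin n)) {a b : ℝ} (ha : 0 ≤ a) (hab : a ≤ b)
    (hmem : ∀ s ∈ Icc a b, φ x s ∈ Ω) :
    (V (φ x b) - 1) * Real.exp b ≤ (V (φ x a) - 1) * Real.exp a := by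
  set g : ℝ → ℝ := fun t => (V (φ x t) - 1) * Real.exp t with hg
  have hIcc : Icc a b ⊆ Ici (0:ℝ) := fun s hs => mem_Ici.2 (ha.trans hs.1)
  have hφcont : ContinuousOn (φ x) (Icc a b) := fun t ht =>
    ((hφ.1 x t (ha.trans ht.1)).continuousWithinAt).mono hIcc
  have hcont : ContinuousOn g (Icc a b) :=
    ((hV.continuous.comp_continuousOn hφcont).sub continuousOn_const).mul
      Real.continuous_exp.continuousOn
  have hkey : ∀ t ∈ Ioo a b, HasDerivAt g
      (fderiv ℝ V (φ x t) (f (φ x t)) * Real.exp t + (V (φ x t) - 1) * Real.exp t) t := by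
    intro t ht
    have ht0 : (0:ℝ) < t := lt_of_le_of_lt ha ht.1
    have hφd : HasDerivAt (φ x) (f (φ x t)) t :=
      (hφ.1 x t ht0.le).hasDerivAt (Ici_mem_nhds ht0)
    have hVd : HasFDerivAt V (fderiv ℝ V (φ x t)) (φ x t) :=
      ((hV.differentiable one_ne_zero) (φ x t)).hasFDerivAt
    have hcomp : HasDerivAt (fun s => V (φ x s)) (fderiv ℝ V (φ x t) (f (φ x t))) t :=
      hVd.comp_hasDerivAt t hφd
    exact ((hcomp.sub_const 1).mul (Real.hasDerivAt_exp t))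
  have hanti : AntitoneOn g (Icc a b) := by
    apply antitoneOn_of_deriv_nonpos (convex_Icc a b) hcont
    · intro t ht
      rw [interior_Icc] at ht
      exact (hkey t ht).differentiableAt.differentiableWithinAt
    · intro t ht
      rw [interior_Icc] at ht
      rw [(hkey t ht).deriv]
      have hL := hLie _ (hmem t ⟨ht.1.le, ht.2.le⟩)
      have hE := Real.exp_pos t
      nlinarith
  exact hanti (left_mem_Icc.2 hab) (right_mem_Icc.2 hab) hab

/-- Lem. 10 of the paper: if `A*` is the minimal attractor set,
`V` is nonnegative and `C¹`, `σ > 0`, `Ω` is compact with `∇V(x)ᵀ f(x) ≤ −(V(x) − 1)` on `Ω`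
and `B(A*,σ) ⊆ Ω`, then `A* ⊆ {x ∈ Ω : V(x) ≤ 1}`. -/
theorem minimal_attractor_subset_sublevel {n : ℕ}
    (f : EuclideanSpace ℝ (Fin n) → EuclideanSpace ℝ (Fin n))
    (φ : EuclideanSpace ℝ (Fin n) → ℝ → EuclideanSpace ℝ (Fin n))
    (V : EuclideanSpace ℝ (Fin n) → ℝ)
    (Astar Ω : Set (EuclideanSpace ℝ (Fin n))) (σ : ℝ)
    (hf : ContDiff ℝ 1 f) (hφ : IsSolutionMap f φ)
    (hA : IsMinimalAttractor φ Astar)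
    (hV : ContDiff ℝ 1 V) (hVnonneg : ∀ x, 0 ≤ V x)
    (hσ : 0 < σ)
    (hΩ : IsCompact Ω)
    (hLie : ∀ x ∈ Ω, fderiv ℝ V x (f x) ≤ -(V x - 1))
    (hthick : Metric.thickening σ Astar ⊆ Ω) :
    Astar ⊆ {x ∈ Ω | V x ≤ 1} := by
  obtain ⟨⟨hAcomp, hAne, hAinv, hAatt, hAstab⟩, hmin⟩ := hA
  have hAsubΩ : Astar ⊆ Ω := (Metric.self_subset_thickening hσ Astar).trans hthick
  have hmemΩnear : ∀ z, Metric.infDist z Astar < σ → z ∈ Ω := fun z hz =>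
    hthick ((Metric.mem_thickening_iff_infDist_lt hAne).2 hz)
  -- decay corollary
  have hdecay : ∀ x, ∀ t ≥ (0:ℝ), (∀ s ∈ Icc (0:ℝ) t, φ x s ∈ Ω) →
      V (φ x t) - 1 ≤ (V x - 1) * Real.exp (-t) := by
    intro x t ht hmem
    have h := decay_lemma hφ hV hLie x le_rfl ht hmem
    rw [hφ.2.1, Real.exp_zero, mul_one] at h
    have h2 := mul_le_mul_of_nonneg_right h (Real.exp_pos (-t)).le
    have h3 : Real.exp t * Real.exp (-t) = 1 := by
      rw [← Real.exp_add]; simp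
    rw [mul_assoc, h3, mul_one] at h2
    linarith
  -- bounds on compact Ω
  obtain ⟨L₀, hL₀⟩ := hΩ.exists_bound_of_continuousOn hf.continuous.continuousOn
  set L := max L₀ 1 with hLdef
  have hLpos : (0:ℝ) < L := lt_of_lt_of_le one_pos (le_max_right _ _)
  have hL : ∀ z ∈ Ω, ‖f z‖ ≤ L := fun z hz => (hL₀ z hz).trans (le_max_left _ _)
  obtain ⟨K₀, hK₀⟩ := hΩ.exists_bound_of_continuousOn hV.continuous.continuousOn
  set K := |K₀| + 1 with hKdef
  have hKpos : (0:ℝ) < K := by positivity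
  have hK : ∀ z ∈ Ω, V z - 1 ≤ K := by
    intro z hz
    have := hK₀ z hz
    rw [Real.norm_eq_abs] at this
    have h1 := (abs_le.1 this).2
    have h2 := le_abs_self K₀
    linarith
  -- uniform continuity of V on Ω
  have huc : ∀ γ > (0:ℝ), ∃ η > (0:ℝ), ∀ z ∈ Ω, ∀ w ∈ Ω, dist z w < η → |V z - V w| < γ := by
    intro γ hγ
    have h := hΩ.uniformContinuousOn_of_continuous hV.continuous.continuousOn
    rw [Metric.uniformContinuousOn_iff] at h
    obtain ⟨η, hη, h⟩ := h γ hγ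
    exact ⟨η, hη, fun z hz w hw hd => by rw [← Real.dist_eq]; exact h z hz w hw hd⟩
  -- main claim
  suffices hmain : ∀ x ∈ Astar, V x ≤ 1 by
    exact fun x hx => ⟨hAsubΩ hx, hmain x hx⟩
  by_contra hcon
  push_neg at hcon
  obtain ⟨x₀, hx₀A, hx₀V⟩ := hcon
  set c := (V x₀ + 1) / 2 with hc
  have hc1 : 1 < c := by rw [hc]; linarith
  have hcV : c < V x₀ := by rw [hc]; linarith
  set B := Astar ∩ {z | V z ≤ c} with hBdef
  have hdecA : ∀ x ∈ Astar, ∀ t ≥ (0:ℝ), V (φ x t) - 1 ≤ (V x - 1) * Real.exp (-t) :=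
    fun x hx t ht => hdecay x t ht (fun s hs => hAsubΩ (hAinv x hx s hs.1))
  -- B nonempty
  obtain ⟨T₀, hT₀0, hT₀⟩ := exp_small (V x₀ - 1) (c - 1) (by linarith)
  have hBne : B.Nonempty := by
    refine ⟨φ x₀ T₀, hAinv x₀ hx₀A T₀ hT₀0, ?_⟩
    have h1 := hdecA x₀ hx₀A T₀ hT₀0
    have h2 := hT₀ T₀ le_rfl
    simp only [mem_setOf_eq]
    linarith
  -- B compact
  have hBcomp : IsCompact B :=
    hAcomp.inter_right (isClosed_le hV.continuous continuous_const)
  -- B forward invariant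
  have hBinv : ∀ x ∈ B, ∀ t ≥ (0:ℝ), φ x t ∈ B := by
    rintro x ⟨hxA, hxV⟩ t ht
    refine ⟨hAinv x hxA t ht, ?_⟩
    have h1 := hdecA x hxA t ht
    have hE1 : Real.exp (-t) ≤ 1 := Real.exp_le_one_iff.2 (by linarith)
    have hEpos := Real.exp_pos (-t)
    simp only [mem_setOf_eq] at hxV ⊢
    nlinarith
  -- B attraction
  have hBatt : ∀ x ∈ B, ∃ δ > (0:ℝ), ∀ ε > (0:ℝ), ∃ T ≥ (0:ℝ),
      ∀ y ∈ Metric.ball x δ, ∀ t ≥ T, Metric.infDist (φ y t) B < ε := by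
    rintro x ⟨hxA, -⟩
    obtain ⟨δ, hδ, hatt⟩ := hAatt x hxA
    refine ⟨δ, hδ, ?_⟩
    intro ε hε
    obtain ⟨η₀, hη₀, hucV⟩ := huc ((c - 1) / 2) (by linarith)
    set η := min (min (ε / 2) (σ / 2)) η₀ with hηdef
    have hηpos : 0 < η := lt_min (lt_min (by linarith) (by linarith)) hη₀
    have hησ : η < σ :=
      lt_of_le_of_lt ((min_le_left _ _).trans (min_le_right _ _)) (by linarith)
    obtain ⟨δ₅, hδ₅pos, hstab⟩ := hAstab η hηpos
    obtain ⟨T₁, hT₁0, hT₁⟩ := hatt (min δ₅ η) (lt_min hδ₅pos hηpos)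
    obtain ⟨S, hS0, hS⟩ := exp_small K ((c - 1) / 2) (by linarith)
    refine ⟨T₁ + S, by linarith, ?_⟩
    intro y hy t ht
    have hz := hT₁ y hy T₁ le_rfl
    have hzthick : φ y T₁ ∈ Metric.thickening δ₅ Astar :=
      (Metric.mem_thickening_iff_infDist_lt hAne).2 (lt_of_lt_of_le hz (min_le_left _ _))
    have hzstay : ∀ s ≥ (0:ℝ), Metric.infDist (φ (φ y T₁) s) Astar < η :=
      fun s hs => hstab _ hzthick s hs
    have hst : (0:ℝ) ≤ t - T₁ := by linarith
    have hzΩ : ∀ s ∈ Icc (0:ℝ) (t - T₁), φ (φ y T₁) s ∈ Ω := fun s hs =>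
      hmemΩnear _ (lt_trans (hzstay s hs.1) hησ)
    have hdec := hdecay (φ y T₁) (t - T₁) hst hzΩ
    have hsem : φ (φ y T₁) (t - T₁) = φ y t := by
      rw [hφ.2.2 y T₁ hT₁0 (t - T₁) hst]
      congr 1
      ring
    have hzΩ0 : φ y T₁ ∈ Ω := by
      have := hzΩ 0 ⟨le_rfl, hst⟩
      rwa [hφ.2.1] at this
    have hVz := hK _ hzΩ0
    have hKs := hS (t - T₁) (by linarith)
    have hVt : V (φ y t) < 1 + (c - 1) / 2 := by
      rw [← hsem]
      have h2 := mul_le_mul_of_nonneg_right hVz (Real.exp_pos (-(t - T₁))).le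
      have h4 := lt_of_le_of_lt (hdec.trans h2) hKs
      linarith [h4]
    have hnear : Metric.infDist (φ y t) Astar < η := by
      have := hzstay (t - T₁) hst
      rwa [hsem] at this
    obtain ⟨a, haA, had⟩ := (Metric.infDist_lt_iff hAne).1 hnear
    have haB : a ∈ B := by
      refine ⟨haA, ?_⟩
      have hφΩ : φ y t ∈ Ω := hmemΩnear _ (lt_trans hnear hησ)
      have hd : dist a (φ y t) < η₀ := by
        rw [dist_comm]
        exact lt_of_lt_of_le had (min_le_right _ _)
      have habs := abs_lt.1 (hucV a (hAsubΩ haA) (φ y t) hφΩ hd)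
      simp only [mem_setOf_eq]
      linarith [habs.2]
    have hηε : η ≤ ε / 2 := (min_le_left _ _).trans (min_le_left _ _)
    calc Metric.infDist (φ y t) B ≤ dist (φ y t) a := Metric.infDist_le_dist_of_mem haB
      _ < η := had
      _ < ε := by linarith
  -- B stability
  have hBstab : ∀ ε > (0:ℝ), ∃ δ > (0:ℝ), ∀ x ∈ Metric.thickening δ B, ∀ t ≥ (0:ℝ),
      Metric.infDist (φ x t) B < ε := by
    intro ε hε
    set t₀ := ε / (2 * L) with ht₀def
    have ht₀pos : 0 < t₀ := by positivity
    set E₀ := Real.exp (-t₀) with hE₀def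
    have hE₀pos : 0 < E₀ := Real.exp_pos _
    have hE₀lt : E₀ < 1 := Real.exp_lt_one_iff.2 (by linarith)
    set γ₁ := (c - 1) * (1 - E₀) / 3 with hγ₁def
    have hγ₁pos : 0 < γ₁ := by
      rw [hγ₁def]
      have := mul_pos (show (0:ℝ) < c - 1 by linarith) (show (0:ℝ) < 1 - E₀ by linarith)
      linarith
    obtain ⟨η₂, hη₂pos, hucV⟩ := huc γ₁ hγ₁pos
    set η' := min (min (ε / 2) (σ / 2)) η₂ with hη'def
    have hη'pos : 0 < η' := lt_min (lt_min (by linarith) (by linarith)) hη₂pos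
    have hη'σ : η' < σ :=
      lt_of_le_of_lt ((min_le_left _ _).trans (min_le_right _ _)) (by linarith)
    obtain ⟨δ₅, hδ₅pos, hstab⟩ := hAstab η' hη'pos
    set δ := min (min (ε / 2) δ₅) η₂ with hδdef
    have hδpos : 0 < δ := lt_min (lt_min (by linarith) hδ₅pos) hη₂pos
    refine ⟨δ, hδpos, ?_⟩
    intro x hx t ht
    obtain ⟨b, hbB, hbd⟩ := Metric.mem_thickening_iff.1 hx
    have hxthick : x ∈ Metric.thickening δ₅ Astar :=
      Metric.mem_thickening_iff.2
        ⟨b, hbB.1, lt_of_lt_of_le hbd ((min_le_left _ _).trans (min_le_right _ _))⟩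
    have hstay : ∀ s ≥ (0:ℝ), Metric.infDist (φ x s) Astar < η' :=
      fun s hs => hstab x hxthick s hs
    have htrajΩ : ∀ s, 0 ≤ s → φ x s ∈ Ω := fun s hs =>
      hmemΩnear _ (lt_trans (hstay s hs) hη'σ)
    have hxΩ : x ∈ Ω := by
      have := htrajΩ 0 le_rfl
      rwa [hφ.2.1] at this
    have hbΩ : b ∈ Ω := hAsubΩ hbB.1
    have hVx : V x < c + γ₁ := by
      have h := abs_lt.1 (hucV x hxΩ b hbΩ (lt_of_lt_of_le hbd (min_le_right _ _)))
      have := hbB.2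
      simp only [mem_setOf_eq] at this
      linarith [h.1, h.2]
    have hδε : δ ≤ ε / 2 := (min_le_left _ _).trans (min_le_left _ _)
    rcases le_or_gt t t₀ with hcase | hcase
    · -- short time
      have hmb : ∀ u ∈ Icc (0:ℝ) t, ‖φ x u - φ x 0‖ ≤ L * (u - 0) := by
        apply norm_image_sub_le_of_norm_deriv_le_segment' (f' := fun s => f (φ x s))
        · exact fun s hs => (hφ.1 x s hs.1).mono (fun u hu => hu.1)
        · exact fun s hs => hL _ (htrajΩ s hs.1)
      have h1 := hmb t (right_mem_Icc.2 ht)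
      rw [hφ.2.1, sub_zero] at h1
      have hd1 : dist (φ x t) x ≤ L * t := by rwa [dist_eq_norm]
      have hLt : L * t ≤ ε / 2 := by
        have h2 : L * t ≤ L * t₀ := mul_le_mul_of_nonneg_left hcase hLpos.le
        have h3 : L * t₀ = ε / 2 := by
          rw [ht₀def]
          field_simp
        linarith
      have := dist_triangle (φ x t) x b
      have hfin : dist (φ x t) b < ε := by linarith
      exact lt_of_le_of_lt (Metric.infDist_le_dist_of_mem hbB) hfin
    · -- long time
      have hdec := hdecay x t (by linarith) (fun s hs => htrajΩ s hs.1)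
      have hEm : Real.exp (-t) ≤ E₀ := Real.exp_le_exp.2 (by linarith)
      have hVt : V (φ x t) - 1 ≤ (c - 1 + γ₁) * E₀ := by
        rcases le_or_gt (V x) 1 with h | h
        · have h0 : (V x - 1) * Real.exp (-t) ≤ 0 :=
            mul_nonpos_of_nonpos_of_nonneg (by linarith) (Real.exp_pos _).le
          nlinarith
        · have h1 : (V x - 1) * Real.exp (-t) ≤ (c - 1 + γ₁) * E₀ :=
            mul_le_mul (by linarith) hEm (Real.exp_pos _).le (by linarith)
          linarith
      have hnear := hstay t (by linarith)
      obtain ⟨a, haA, had⟩ := (Metric.infDist_lt_iff hAne).1 hnear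
      have haB : a ∈ B := by
        refine ⟨haA, ?_⟩
        have hφΩ : φ x t ∈ Ω := htrajΩ t (by linarith)
        have hd : dist a (φ x t) < η₂ := by
          rw [dist_comm]
          exact lt_of_lt_of_le had (min_le_right _ _)
        have habs := abs_lt.1 (hucV a (hAsubΩ haA) (φ x t) hφΩ hd)
        simp only [mem_setOf_eq]
        -- V a < V (φ x t) + γ₁ ≤ 1 + (c-1+γ₁) E₀ + γ₁ ≤ c
        have hkey : (c - 1 + γ₁) * E₀ + γ₁ ≤ c - 1 := by
          have h1 : 0 ≤ (c - 1) * ((1 - E₀) * (2 - E₀)) :=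
            mul_nonneg (by linarith) (mul_nonneg (by linarith) (by linarith))
          rw [hγ₁def]
          linarith [h1]
        linarith [habs.2]
      have hη'ε : η' ≤ ε / 2 := (min_le_left _ _).trans (min_le_left _ _)
      calc Metric.infDist (φ x t) B ≤ dist (φ x t) a := Metric.infDist_le_dist_of_mem haB
        _ < η' := had
        _ < ε := by linarith
  -- contradiction with minimality
  have hBattr : IsAttractor φ B := ⟨hBcomp, hBne, hBinv, hBatt, hBstab⟩
  refine hmin B hBattr ?_
  refine (ssubset_iff_subset_ne).2 ⟨inter_subset_left, ?_⟩
  intro h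
  have : x₀ ∈ B := h ▸ hx₀A
  exact absurd this.2 (not_le.2 hcV)
end
end

section
/- Let f : ℝⁿ → ℝⁿ be continuously differentiable with solution map φ of the ODE ẋ = f(x). Suppose A ⊂ ℝⁿ is a stable compact attractor set of the ODE, V : ℝⁿ → [0,∞) is continuously differentiable, σ > 0, and Ω ⊂ ℝⁿ is a compact set with ∇V(x)ᵀ f(x) ≤ −(V(x) − 1) for all x ∈ Ω and B(A,σ) ⊆ Ω. Then A ∩ {x ∈ Ω : V(x) ≤ 1} is itself a stable compact attractor set of the ODE. -/
open Set Filter MeasureTheory Metric Topology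

noncomputable section

/-- helper: choose `T` so that `(v-1)e^{-t} ≤ c` for `t ≥ T`, `v ≤ M`. -/
lemma expT_aux (M c : ℝ) (hM : 0 ≤ M) (hc : 0 < c) :
    ∃ T ≥ (0:ℝ), ∀ t ≥ T, ∀ v ≤ M, (v - 1) * Real.exp (-t) ≤ c := by
  refine ⟨max 0 (Real.log ((M+1)/c)), le_max_left _ _, fun t ht v hv => ?_⟩
  have hr : (0:ℝ) < (M+1)/c := by positivity
  have h1 : Real.exp (-t) ≤ c / (M+1) := by
    have h2 : Real.exp (-t) ≤ Real.exp (-(Real.log ((M+1)/c))) := by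
      apply Real.exp_le_exp.2
      have := le_trans (le_max_right 0 (Real.log ((M+1)/c))) ht
      linarith
    have h3 : Real.exp (-(Real.log ((M+1)/c))) = c/(M+1) := by
      rw [Real.exp_neg, Real.exp_log hr, inv_div]
    exact h3 ▸ h2
  have hexp0 : 0 < Real.exp (-t) := Real.exp_pos _
  rcases le_or_gt v 1 with h | h
  · nlinarith
  · have h3 : (v-1) * Real.exp (-t) ≤ (M+1) * (c/(M+1)) :=
      mul_le_mul (by linarith) h1 hexp0.le (by linarith)
    have h4 : (M+1) * (c/(M+1)) = c := by field_simp
    linarith [h4 ▸ h3]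

/-- if `A` is a stable compact attractor set, `V` is nonnegative and `C¹`,
`σ > 0`, and `Ω` is compact with `∇V(x)ᵀ f(x) ≤ −(V(x) − 1)` on `Ω` and `B(A,σ) ⊆ Ω`, then
`A ∩ {x ∈ Ω : V(x) ≤ 1}` is itself a stable compact attractor set. -/
theorem inter_sublevel_is_attractor {n : ℕ}
    (f : EuclideanSpace ℝ (Fin n) → EuclideanSpace ℝ (Fin n))
    (φ : EuclideanSpace ℝ (Fin n) → ℝ → EuclideanSpace ℝ (Fin n))
    (V : EuclideanSpace ℝ (Fin n) → ℝ)
    (A Ω : Set (EuclideanSpace ℝ (Fin n))) (σ : ℝ)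
    (hf : ContDiff ℝ 1 f) (hφ : IsSolutionMap f φ)
    (hA : IsAttractor φ A)
    (hV : ContDiff ℝ 1 V) (hVnonneg : ∀ x, 0 ≤ V x)
    (hσ : 0 < σ)
    (hΩ : IsCompact Ω)
    (hLie : ∀ x ∈ Ω, fderiv ℝ V x (f x) ≤ -(V x - 1))
    (hthick : Metric.thickening σ A ⊆ Ω) :
    IsAttractor φ (A ∩ {x ∈ Ω | V x ≤ 1}) := by
  obtain ⟨hode, hinit, -⟩ := hφ
  obtain ⟨hAc, hAne, hAinv, hAattr, hAstab⟩ := hA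
  set A' : Set (EuclideanSpace ℝ (Fin n)) := A ∩ {x ∈ Ω | V x ≤ 1} with hA'def
  have hAΩ : A ⊆ Ω := (self_subset_thickening hσ A).trans hthick
  have hVc : Continuous V := hV.continuous
  have hcont : ∀ x, ContinuousOn (φ x) (Ici 0) := fun x t ht =>
    (hode x t ht).continuousWithinAt
  -- Gronwall-type estimate
  have gron : ∀ x : EuclideanSpace ℝ (Fin n), ∀ T : ℝ, 0 ≤ T →
      (∀ t ∈ Icc (0:ℝ) T, φ x t ∈ Ω) → V (φ x T) - 1 ≤ (V x - 1) * Real.exp (-T) := by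
    intro x T hT hmem
    set g : ℝ → ℝ := fun t => (V (φ x t) - 1) * Real.exp t with hg
    have hder : ∀ t ∈ Ioo (0:ℝ) T, HasDerivAt g
        ((fderiv ℝ V (φ x t) (f (φ x t))) * Real.exp t + (V (φ x t) - 1) * Real.exp t) t := by
      intro t ht
      have h1 : HasDerivAt (φ x) (f (φ x t)) t :=
        (hode x t ht.1.le).hasDerivAt (Ici_mem_nhds ht.1)
      have h2 : HasDerivAt (fun s => V (φ x s)) (fderiv ℝ V (φ x t) (f (φ x t))) t :=
        ((hV.differentiable one_ne_zero (φ x t)).hasFDerivAt.comp_hasDerivAt t h1)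
      exact (h2.sub_const 1).mul (Real.hasDerivAt_exp t)
    have hanti : AntitoneOn g (Icc 0 T) := by
      apply antitoneOn_of_deriv_nonpos (convex_Icc 0 T)
      · exact ((hVc.comp_continuousOn ((hcont x).mono Icc_subset_Ici_self)).sub
          continuousOn_const).mul Real.continuous_exp.continuousOn
      · rw [interior_Icc]
        exact fun t ht => ((hder t ht).differentiableAt).differentiableWithinAt
      · rw [interior_Icc]
        intro t ht
        rw [(hder t ht).deriv]
        have hΩt : φ x t ∈ Ω := hmem t ⟨ht.1.le, ht.2.le⟩
        have hL := hLie _ hΩt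
        have hexp : 0 < Real.exp t := Real.exp_pos t
        nlinarith
    have h0 := hanti (left_mem_Icc.2 hT) (right_mem_Icc.2 hT) hT
    simp only [hg, hinit x, Real.exp_zero, mul_one] at h0
    calc V (φ x T) - 1 = ((V (φ x T) - 1) * Real.exp T) * Real.exp (-T) := by
          rw [mul_assoc, ← Real.exp_add, add_neg_cancel, Real.exp_zero, mul_one]
      _ ≤ (V x - 1) * Real.exp (-T) :=
          mul_le_mul_of_nonneg_right h0 (Real.exp_nonneg _)
  -- closedness of the sublevel part
  have hScl : IsClosed {x ∈ Ω | V x ≤ 1} := by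
    have : {x ∈ Ω | V x ≤ 1} = Ω ∩ V ⁻¹' Iic 1 := rfl
    rw [this]
    exact hΩ.isClosed.inter (isClosed_Iic.preimage hVc)
  have hA'c : IsCompact A' := hAc.inter_right hScl
  -- nonemptiness of A'
  obtain ⟨x₀, hx₀⟩ := id hAne
  have hA'ne : A'.Nonempty := by
    set K : ℕ → Set (EuclideanSpace ℝ (Fin n)) :=
      fun m => {z ∈ A | V z ≤ 1 + 1/((m:ℝ)+1)} with hK
    have hKcl : ∀ m, IsClosed (K m) := by
      intro m
      have : K m = A ∩ V ⁻¹' Iic (1 + 1/((m:ℝ)+1)) := rfl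
      rw [this]
      exact hAc.isClosed.inter (isClosed_Iic.preimage hVc)
    have hKsub : ∀ m, K (m+1) ⊆ K m := by
      intro m z hz
      refine ⟨hz.1, hz.2.trans ?_⟩
      have h1 : (0:ℝ) < (m:ℝ)+1 := by positivity
      have h2 : ((m:ℝ)+1) ≤ ((m:ℝ)+1+1) := by linarith
      have := one_div_le_one_div_of_le h1 h2
      push_cast
      linarith
    have hKne : ∀ m, (K m).Nonempty := by
      intro m
      have hc : (0:ℝ) < 1/((m:ℝ)+1) := by positivity
      obtain ⟨T, hT0, hT⟩ := expT_aux (V x₀) (1/((m:ℝ)+1)) (hVnonneg x₀) hc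
      refine ⟨φ x₀ T, hAinv x₀ hx₀ T hT0, ?_⟩
      have h1 := gron x₀ T hT0 (fun t ht => hAΩ (hAinv x₀ hx₀ t ht.1))
      have h2 := hT T le_rfl (V x₀) le_rfl
      show V (φ x₀ T) ≤ 1 + 1/((m:ℝ)+1)
      linarith
    obtain ⟨z, hz⟩ := IsCompact.nonempty_iInter_of_sequence_nonempty_isCompact_isClosed K hKsub
      hKne (hAc.of_isClosed_subset (hKcl 0) (fun z hz => hz.1)) hKcl
    simp only [mem_iInter] at hz
    have hzA : z ∈ A := (hz 0).1
    have hzV : V z ≤ 1 := by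
      by_contra h
      push_neg at h
      obtain ⟨m, hm⟩ := exists_nat_one_div_lt (sub_pos.2 h)
      have := (hz m).2
      linarith
    exact ⟨z, hzA, hAΩ hzA, hzV⟩
  -- separation lemma
  have sep : ∀ η > (0:ℝ), ∃ δ > (0:ℝ), ∃ c > (0:ℝ), ∀ z, infDist z A < δ → V z ≤ 1 + c →
      infDist z A' < η := by
    intro η hη
    by_contra hcon
    push_neg at hcon
    set K : ℕ → Set (EuclideanSpace ℝ (Fin n)) :=
      fun m => {z | infDist z A ≤ 1/((m:ℝ)+1) ∧ V z ≤ 1 + 1/((m:ℝ)+1) ∧ η ≤ infDist z A'}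
      with hK
    have hKcl : ∀ m, IsClosed (K m) := by
      intro m
      have : K m = {z | infDist z A ≤ 1/((m:ℝ)+1)} ∩
          ({z | V z ≤ 1 + 1/((m:ℝ)+1)} ∩ {z | η ≤ infDist z A'}) := by
        ext z; simp [hK, and_assoc]
      rw [this]
      exact (isClosed_le (continuous_infDist_pt A) continuous_const).inter
        ((isClosed_le hVc continuous_const).inter
          (isClosed_le continuous_const (continuous_infDist_pt A')))
    have hKsub : ∀ m, K (m+1) ⊆ K m := by
      intro m z hz
      have h1 : (0:ℝ) < (m:ℝ)+1 := by positivity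
      have h2 : ((m:ℝ)+1) ≤ ((m:ℝ)+1+1) := by linarith
      have h3 := one_div_le_one_div_of_le h1 h2
      have hz1 := hz.1; have hz2 := hz.2.1; have hz3 := hz.2.2
      push_cast at hz1 hz2 ⊢
      exact ⟨by linarith, by linarith, hz3⟩
    have hKne : ∀ m, (K m).Nonempty := by
      intro m
      have hc : (0:ℝ) < 1/((m:ℝ)+1) := by positivity
      obtain ⟨z, hz1, hz2, hz3⟩ := hcon (1/((m:ℝ)+1)) hc (1/((m:ℝ)+1)) hc
      exact ⟨z, hz1.le, hz2, hz3⟩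
    have hK0 : IsCompact (K 0) := by
      apply (hAc.cthickening (r := 2)).of_isClosed_subset (hKcl 0)
      intro z hz
      apply thickening_subset_cthickening 2 A
      rw [mem_thickening_iff_infDist_lt hAne]
      have := hz.1
      norm_num at this ⊢
      linarith
    obtain ⟨z, hz⟩ := IsCompact.nonempty_iInter_of_sequence_nonempty_isCompact_isClosed K hKsub
      hKne hK0 hKcl
    simp only [mem_iInter] at hz
    have hzA : z ∈ A := by
      rw [(hAc.isClosed.mem_iff_infDist_zero hAne)]
      have h1 : infDist z A ≤ 0 := by
        by_contra h
        push_neg at h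
        obtain ⟨m, hm⟩ := exists_nat_one_div_lt h
        have := (hz m).1
        linarith
      exact le_antisymm h1 infDist_nonneg
    have hzV : V z ≤ 1 := by
      by_contra h
      push_neg at h
      obtain ⟨m, hm⟩ := exists_nat_one_div_lt (sub_pos.2 h)
      have := (hz m).2.1
      linarith
    have hzA' : z ∈ A' := ⟨hzA, hAΩ hzA, hzV⟩
    have := (hz 0).2.2
    rw [infDist_zero_of_mem hzA'] at this
    linarith
  refine ⟨hA'c, hA'ne, ?_, ?_, ?_⟩
  -- forward invariance
  · rintro x ⟨hxA, hxΩ, hxV⟩ t ht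
    refine ⟨hAinv x hxA t ht, hAΩ (hAinv x hxA t ht), ?_⟩
    have hgr := gron x t ht (fun s hs => hAΩ (hAinv x hxA s hs.1))
    nlinarith [Real.exp_pos (-t)]
  -- attraction
  · rintro x ⟨hxA, -, -⟩
    obtain ⟨δx, hδx, hTx⟩ := hAattr x hxA
    obtain ⟨δσ, hδσ, hstabσ⟩ := hAstab σ hσ
    refine ⟨min δx δσ, lt_min hδx hδσ, ?_⟩
    intro ε hε
    obtain ⟨δ₁, hδ₁, c, hc, hsep⟩ := sep ε hε
    obtain ⟨zM, hzM, hM⟩ := hΩ.exists_isMaxOn ⟨x, hAΩ hxA⟩ hVc.continuousOn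
    obtain ⟨T₂, hT₂0, hT₂⟩ := expT_aux (V zM) c (hVnonneg zM) hc
    obtain ⟨T₁, hT₁0, hT₁⟩ := hTx δ₁ hδ₁
    refine ⟨max T₁ T₂, le_trans hT₁0 (le_max_left _ _), ?_⟩
    intro y hy t ht
    have hyd : dist y x < min δx δσ := mem_ball.1 hy
    have hyσ : y ∈ thickening δσ A := by
      rw [mem_thickening_iff_infDist_lt hAne]
      exact lt_of_le_of_lt (infDist_le_dist_of_mem hxA) (hyd.trans_le (min_le_right _ _))
    have htrajΩ : ∀ s ≥ (0:ℝ), φ y s ∈ Ω := fun s hs => hthick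
      ((mem_thickening_iff_infDist_lt hAne).2 (hstabσ y hyσ s hs))
    have hyΩ : y ∈ Ω := by have := htrajΩ 0 le_rfl; rwa [hinit] at this
    have ht0 : (0:ℝ) ≤ t := le_trans (le_trans hT₁0 (le_max_left _ _)) ht
    have hgr := gron y t ht0 (fun s hs => htrajΩ s hs.1)
    have hVb := hT₂ t (le_trans (le_max_right _ _) ht) (V y) (hM hyΩ)
    have hd : infDist (φ y t) A < δ₁ :=
      hT₁ y (mem_ball.2 (hyd.trans_le (min_le_left _ _))) t (le_trans (le_max_left _ _) ht)
    exact hsep _ hd (by linarith)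
  -- stability
  · intro ε hε
    obtain ⟨δ₁, hδ₁, c, hc, hsep⟩ := sep ε hε
    obtain ⟨δ₂, hδ₂, hstab2⟩ := hAstab (min δ₁ σ) (lt_min hδ₁ hσ)
    have hopen : IsOpen (V ⁻¹' Iio (1+c)) := isOpen_Iio.preimage hVc
    have hA'sub : A' ⊆ V ⁻¹' Iio (1+c) := by
      rintro z ⟨-, -, hz⟩
      simp only [Set.mem_preimage, Set.mem_Iio]
      linarith
    obtain ⟨δ₃, hδ₃, hsub3⟩ := hA'c.exists_thickening_subset_open hopen hA'sub
    refine ⟨min δ₂ δ₃, lt_min hδ₂ hδ₃, ?_⟩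
    intro x hx t ht
    have hx2 : x ∈ thickening δ₂ A :=
      thickening_subset_of_subset δ₂ inter_subset_left
        (thickening_mono (min_le_left δ₂ δ₃) A' hx)
    have hx3 : x ∈ V ⁻¹' Iio (1+c) := hsub3 (thickening_mono (min_le_right δ₂ δ₃) A' hx)
    have htrajΩ : ∀ s ≥ (0:ℝ), φ x s ∈ Ω := fun s hs => hthick
      ((mem_thickening_iff_infDist_lt hAne).2
        (lt_of_lt_of_le (hstab2 x hx2 s hs) (min_le_right _ _)))
    have hgr := gron x t ht (fun s hs => htrajΩ s hs.1)
    have hVx : V x < 1 + c := hx3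
    have hd : infDist (φ x t) A < δ₁ := lt_of_lt_of_le (hstab2 x hx2 t ht) (min_le_left _ _)
    have hVt : V (φ x t) ≤ 1 + c := by
      have he : Real.exp (-t) ≤ 1 := Real.exp_le_one_iff.2 (by linarith)
      have hep : 0 < Real.exp (-t) := Real.exp_pos _
      rcases le_or_gt (V x) 1 with h | h
      · nlinarith
      · nlinarith
    exact hsep _ hd hVt
end
end

section
/- Let Ω ⊂ ℝⁿ be compact with Lebesgue measure μ(Ω), let f : ℝⁿ → ℝⁿ be continuous, and let γ > 0. Let H : ℝⁿ → ℝ be continuously differentiable with H(x) ≥ √γ for all x ∈ Ω and satisfying 2H(x)∇H(x)ᵀ f(x) ≤ −(H(x)² − γ) for all x ∈ Ω. Set M₁ := sup_{x∈Ω} ‖f(x)‖₂, M₂ := sup_{x∈Ω} |H(x)|, M₃ := sup_{x∈Ω} ‖∇H(x)‖₂, and assume √γ − M₁M₃ > 0. Let θ > 0 and choose 0 < δ < min{ (√γ − M₁M₃)/(M₁M₂ + M₁M₃ + M₂), √γ/M₂ } and 0 < σ < min{ 2(√γ − (M₁M₂ + M₁M₃ + M₂)δ − M₁M₃)/((2M₁+1)δ²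 + 2(1+M₁)δ + 1), 2(√γ − M₂δ)/(δ+1)², √θ/(√(2(μ(Ω)+1))(δ+1)), θ/(4M₂(δ+1)(μ(Ω)+1)) }. Suppose R : ℝⁿ → ℝ is continuously differentiable (e.g., a polynomial) with |H(x) − R(x)| < δσ and ‖∇H(x) − ∇R(x)‖₂ < δσ for all x ∈ Ω. Then G(x) := (R(x) − σ)² satisfies, for all x ∈ Ω: (1) ∇G(x)ᵀ f(x) < −(G(x) − γ); (2) G(x) < H(x)²; (3) H(x)² − G(x) < θ/(μ(Ω)+1). -/
/-!
Write `e = H - R`, so `|e| < δσ`. Then `H² - (R - σ)² = (σ + e)(2H - σ - e)` is the product of a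
factor in `((1 - δ)σ, (1 + δ)σ)` and a factor close to `2H ≥ 2√γ`; this gives (2) and, with the
last two bounds on `σ`, (3). For (1), `∇G · f = 2(R - σ)∇R · f` differs from `2H∇H · f ≤ γ - H²`
by at most `2σ((1 + δ)(M₃ + δσ)M₁ + δM₁M₂)`, and the first bound on `σ` makes this smaller than
the gap `H² - (R - σ)² > (1 - δ)σ(2√γ - (1 + δ)σ)`.
-/

open Set InnerProductSpace

section Estimates

variable {h r σ δ s M₁ M₂ M₃ : ℝ}

lemma mul_lt_sq_sub_sq_sub (hr : |h - r| < δ * σ) (hsh : s ≤ h) (hδ : δ < 1) (hσ : 0 < σ)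
    (hσs : (1 + δ) * σ < 2 * s) :
    (1 - δ) * σ * (2 * s - (1 + δ) * σ) < h ^ 2 - (r - σ) ^ 2 := by
  obtain ⟨hr₁, hr₂⟩ := abs_lt.1 hr
  rw [show h ^ 2 - (r - σ) ^ 2 = (h - r + σ) * (h + r - σ) by ring]
  exact mul_lt_mul'' (by linarith) (by linarith) (mul_nonneg (by linarith) hσ.le) (by linarith)

lemma sub_sq_lt_sq (hr : |h - r| < δ * σ) (hsh : s ≤ h) (hδ : δ < 1) (hσ : 0 < σ)
    (hσs : (1 + δ) * σ < 2 * s) : (r - σ) ^ 2 < h ^ 2 :=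
  sub_pos.1 ((mul_pos (mul_pos (sub_pos.2 hδ) hσ) (sub_pos.2 hσs)).trans
    (mul_lt_sq_sub_sq_sub hr hsh hδ hσ hσs))

lemma sq_sub_sq_sub_lt_mul (hr : |h - r| < δ * σ) (hhM : h ≤ M₂) (hδ : δ ≤ 1) (hσ : 0 ≤ σ)
    (hσh : (1 + δ) * σ ≤ 2 * h) :
    h ^ 2 - (r - σ) ^ 2 < (1 + δ) * σ * (2 * M₂ + δ * σ) := by
  obtain ⟨hr₁, hr₂⟩ := abs_lt.1 hr
  rw [show h ^ 2 - (r - σ) ^ 2 = (h - r + σ) * (h + r - σ) by ring]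
  exact mul_lt_mul'' (by linarith) (by linarith) (by nlinarith) (by linarith)

lemma two_mul_inner_sub_two_mul_inner_le {E : Type*} [NormedAddCommGroup E]
    [InnerProductSpace ℝ E] {gH gR v : E} (hr : |h - r| < δ * σ) (hg : ‖gH - gR‖ < δ * σ)
    (hgH : ‖gH‖ ≤ M₃) (hv : ‖v‖ ≤ M₁) (hσ : 0 ≤ σ) (h₀ : 0 ≤ h) (hhM : h ≤ M₂) :
    2 * (r - σ) * inner ℝ gR v - 2 * h * inner ℝ gH v ≤
      2 * σ * ((1 + δ) * (M₃ + δ * σ) * M₁ + δ * M₁ * M₂) := by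
  have hshift : |r - σ - h| ≤ (1 + δ) * σ := by
    calc |r - σ - h| = |(r - h) - σ| := by ring_nf
      _ ≤ |r - h| + |σ| := abs_sub _ _
      _ ≤ (1 + δ) * σ := by rw [abs_sub_comm, abs_of_nonneg hσ]; linarith
  have hgR : ‖gR‖ ≤ M₃ + δ * σ := by
    linarith [norm_sub_norm_le gR gH, norm_sub_rev gR gH]
  have hshift_mul : (r - σ - h) * inner ℝ gR v ≤ (1 + δ) * σ * ((M₃ + δ * σ) * M₁) :=
    calc (r - σ - h) * inner ℝ gR v ≤ |r - σ - h| * (‖gR‖ * ‖v‖) :=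
          (le_abs_self _).trans ((abs_mul _ _).trans_le
            (mul_le_mul_of_nonneg_left (abs_real_inner_le_norm _ _) (abs_nonneg _)))
      _ ≤ (1 + δ) * σ * ((M₃ + δ * σ) * M₁) :=
          mul_le_mul hshift (mul_le_mul hgR hv (norm_nonneg _) ((norm_nonneg _).trans hgR))
            (by positivity) ((abs_nonneg _).trans hshift)
  have herr : h * inner ℝ (gR - gH) v ≤ M₂ * (δ * σ * M₁) :=
    calc h * inner ℝ (gR - gH) v ≤ h * (‖gR - gH‖ * ‖v‖) :=
          mul_le_mul_of_nonneg_left (real_inner_le_norm _ _) h₀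
      _ ≤ M₂ * (δ * σ * M₁) := by
          rw [norm_sub_rev]
          gcongr
          · exact h₀.trans hhM
          · exact (norm_nonneg _).trans hg.le
  rw [inner_sub_left] at herr
  linarith

lemma one_add_mul_lt_two_mul (hδ : 0 ≤ δ) (hσ : 0 < σ) (hM₂ : 0 ≤ M₂)
    (hσ₂ : σ < 2 * (s - M₂ * δ) / (δ + 1) ^ 2) : (1 + δ) * σ < 2 * s := by
  rw [lt_div_iff₀ (by positivity)] at hσ₂
  nlinarith [mul_nonneg hM₂ hδ, mul_nonneg hσ.le hδ]

lemma two_mul_inner_lt_of_lie {E : Type*} [NormedAddCommGroup E] [InnerProductSpace ℝ E]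
    {γ : ℝ} {gH gR v : E} (hLie : 2 * h * inner ℝ gH v ≤ -(h ^ 2 - γ))
    (hr : |h - r| < δ * σ) (hg : ‖gH - gR‖ < δ * σ) (hgH : ‖gH‖ ≤ M₃) (hv : ‖v‖ ≤ M₁)
    (hsh : s ≤ h) (hhM : h ≤ M₂) (hδ₀ : 0 ≤ δ) (hδ₁ : δ < 1) (hσ : 0 < σ)
    (hσs : (1 + δ) * σ < 2 * s)
    (hσ₁ : σ < 2 * (s - (M₁ * M₂ + M₁ * M₃ + M₂) * δ - M₁ * M₃) /
      ((2 * M₁ + 1) * δ ^ 2 + 2 * (1 + M₁) * δ + 1)) :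
    2 * (r - σ) * inner ℝ gR v < -((r - σ) ^ 2 - γ) := by
  have hM₁ : 0 ≤ M₁ := (norm_nonneg v).trans hv
  rw [lt_div_iff₀ (by positivity)] at hσ₁
  have hperturb := two_mul_inner_sub_two_mul_inner_le hr hg hgH hv hσ.le
    (by nlinarith [mul_nonneg hδ₀ hσ.le]) hhM
  have hgap := mul_lt_sq_sub_sq_sub hr hsh hδ₁ hσ hσs
  have hparam :
      2 * ((1 + δ) * (M₃ + δ * σ) * M₁ + δ * M₁ * M₂) < (1 - δ) * (2 * s - (1 + δ) * σ) := by
    nlinarith [mul_nonneg hδ₀ (sub_nonneg.2 (hsh.trans hhM)), mul_nonneg hσ.le hδ₀,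
      mul_nonneg (mul_nonneg hσ.le hδ₀) hδ₀, mul_nonneg hM₁ hδ₀]
  nlinarith [mul_lt_mul_of_pos_left hparam hσ]

lemma sq_sub_sq_sub_lt_div {θ V : ℝ} (hr : |h - r| < δ * σ) (hhM : h ≤ M₂) (hδ₀ : 0 ≤ δ)
    (hδ₁ : δ ≤ 1) (hσ : 0 < σ) (hσh : (1 + δ) * σ ≤ 2 * h) (hV : 0 ≤ V)
    (hσ₃ : σ < √θ / (√(2 * (V + 1)) * (δ + 1)))
    (hσ₄ : σ < θ / (4 * M₂ * (δ + 1) * (V + 1))) :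
    h ^ 2 - (r - σ) ^ 2 < θ / (V + 1) := by
  have hM₂ : 0 < M₂ := by nlinarith
  rw [lt_div_iff₀ (by positivity), ← mul_assoc, Real.lt_sqrt (by positivity), mul_pow, mul_pow,
    Real.sq_sqrt (by positivity)] at hσ₃
  rw [lt_div_iff₀ (by positivity)] at hσ₄
  rw [lt_div_iff₀ (by positivity)]
  have hbound := sq_sub_sq_sub_lt_mul hr hhM hδ₁ hσ.le hσh
  nlinarith [mul_lt_mul_of_pos_right hbound (by positivity : (0:ℝ) < V + 1),
    mul_nonneg (mul_nonneg (sq_nonneg σ) hδ₀) hV]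

end Estimates

section Gradient

variable {F : Type*} [NormedAddCommGroup F] [InnerProductSpace ℝ F] [CompleteSpace F]

theorem HasGradientAt.sub_const_sq {R : F → ℝ} {g x : F} (hR : HasGradientAt R g x) (c : ℝ) :
    HasGradientAt (fun y => (R y - c) ^ 2) ((2 * (R x - c)) • g) x := by
  refine ((hR.hasFDerivAt.sub_const c).pow 2).congr_fderiv ?_
  rw [map_smul, pow_one, nsmul_eq_mul, Nat.cast_ofNat]

theorem ContDiff.continuous_gradient {H : F → ℝ} (hH : ContDiff ℝ 1 H) :
    Continuous (gradient H) :=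
  (toDual ℝ F).symm.continuous.comp (hH.continuous_fderiv one_ne_zero)

end Gradient

theorem sos_squared_approximation_estimates_general {n : ℕ}
    (Ω : Set (EuclideanSpace ℝ (Fin n)))
    (f : EuclideanSpace ℝ (Fin n) → EuclideanSpace ℝ (Fin n))
    (H R : EuclideanSpace ℝ (Fin n) → ℝ)
    (γ θ δ σ M₁ M₂ M₃ : ℝ)
    (hΩ : IsCompact Ω) (hf : Continuous f) (hγ : 0 < γ)
    (hH : ContDiff ℝ 1 H)
    (hHlb : ∀ x ∈ Ω, Real.sqrt γ ≤ H x)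
    (hLie : ∀ x ∈ Ω, 2 * H x * (inner ℝ (gradient H x) (f x) : ℝ) ≤ -(H x ^ 2 - γ))
    (hM1 : M₁ = sSup ((fun x => ‖f x‖) '' Ω))
    (hM2 : M₂ = sSup ((fun x => |H x|) '' Ω))
    (hM3 : M₃ = sSup ((fun x => ‖gradient H x‖) '' Ω))
    (hδ0 : 0 < δ)
    (hδ2 : δ < Real.sqrt γ / M₂)
    (hσ0 : 0 < σ)
    (hσ1 : σ < 2 * (Real.sqrt γ - (M₁ * M₂ + M₁ * M₃ + M₂) * δ - M₁ * M₃) /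
      ((2 * M₁ + 1) * δ ^ 2 + 2 * (1 + M₁) * δ + 1))
    (hσ2 : σ < 2 * (Real.sqrt γ - M₂ * δ) / (δ + 1) ^ 2)
    (hσ3 : σ < Real.sqrt θ /
      (Real.sqrt (2 * ((MeasureTheory.volume Ω).toReal + 1)) * (δ + 1)))
    (hσ4 : σ < θ / (4 * M₂ * (δ + 1) * ((MeasureTheory.volume Ω).toReal + 1)))
    (hR : ContDiff ℝ 1 R)
    (hRapprox : ∀ x ∈ Ω, |H x - R x| < δ * σ)
    (hRgrad : ∀ x ∈ Ω, ‖gradient H x - gradient R x‖ < δ * σ) :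
    ∀ x ∈ Ω,
      (inner ℝ (gradient (fun y => (R y - σ) ^ 2) x) (f x) : ℝ) < -((R x - σ) ^ 2 - γ) ∧
      (R x - σ) ^ 2 < H x ^ 2 ∧
      H x ^ 2 - (R x - σ) ^ 2 < θ / ((MeasureTheory.volume Ω).toReal + 1) := by
  intro x hx
  have le_sSup {g : EuclideanSpace ℝ (Fin n) → ℝ} (hg : Continuous g) : g x ≤ sSup (g '' Ω) :=
    le_csSup (hΩ.bddAbove_image hg.continuousOn) (mem_image_of_mem g hx)
  have hfx : ‖f x‖ ≤ M₁ := hM1 ▸ le_sSup hf.norm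
  have hHx : H x ≤ M₂ := (le_abs_self _).trans (hM2 ▸ le_sSup hH.continuous.abs)
  have hgx : ‖gradient H x‖ ≤ M₃ := hM3 ▸ le_sSup hH.continuous_gradient.norm
  have hsH : Real.sqrt γ ≤ H x := hHlb x hx
  have hM₂ : 0 < M₂ := (Real.sqrt_pos.2 hγ).trans_le (hsH.trans hHx)
  have hδ1 : δ < 1 := hδ2.trans_le (div_le_one_of_le₀ (hsH.trans hHx) hM₂.le)
  have hσs := one_add_mul_lt_two_mul hδ0.le hσ0 hM₂.le hσ2
  rw [((hR.differentiable one_ne_zero x).hasGradientAt.sub_const_sq σ).gradient,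
    real_inner_smul_left]
  exact ⟨two_mul_inner_lt_of_lie (hLie x hx) (hRapprox x hx) (hRgrad x hx) hgx hfx hsH hHx
      hδ0.le hδ1 hσ0 hσs hσ1,
    sub_sq_lt_sq (hRapprox x hx) hsH hδ1 hσ0 hσs,
    sq_sub_sq_sub_lt_div (hRapprox x hx) hHx hδ0.le hδ1.le hσ0 (by linarith)
      ENNReal.toReal_nonneg hσ3 hσ4⟩

/-- core estimates in Part 2 of the proof of Thm. 7: given the Lyapunov-type
inequality `2H(x)∇H(x)ᵀf(x) ≤ −(H(x)² − γ)` on a compact set `Ω`, sup-bounds `M₁, M₂, M₃`,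
and parameters `θ, δ, σ` chosen within the prescribed ranges, any `C¹` function `R`
approximating `H` and `∇H` to accuracy `δσ` on `Ω` yields `G(x) := (R(x) − σ)²` with
`∇G(x)ᵀf(x) < −(G(x) − γ)`, `G(x) < H(x)²`, and `H(x)² − G(x) < θ/(μ(Ω)+1)` on `Ω`. -/
theorem sos_squared_approximation_estimates {n : ℕ}
    (Ω : Set (EuclideanSpace ℝ (Fin n)))
    (f : EuclideanSpace ℝ (Fin n) → EuclideanSpace ℝ (Fin n))
    (H R : EuclideanSpace ℝ (Fin n) → ℝ)
    (γ θ δ σ M₁ M₂ M₃ : ℝ)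
    (hΩ : IsCompact Ω) (hf : Continuous f) (hγ : 0 < γ)
    (hH : ContDiff ℝ 1 H)
    (hHlb : ∀ x ∈ Ω, Real.sqrt γ ≤ H x)
    (hLie : ∀ x ∈ Ω, 2 * H x * (inner ℝ (gradient H x) (f x) : ℝ) ≤ -(H x ^ 2 - γ))
    (hM1 : M₁ = sSup ((fun x => ‖f x‖) '' Ω))
    (hM2 : M₂ = sSup ((fun x => |H x|) '' Ω))
    (hM3 : M₃ = sSup ((fun x => ‖gradient H x‖) '' Ω))
    (hpos : 0 < Real.sqrt γ - M₁ * M₃)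
    (hθ : 0 < θ)
    (hδ0 : 0 < δ)
    (hδ1 : δ < (Real.sqrt γ - M₁ * M₃) / (M₁ * M₂ + M₁ * M₃ + M₂))
    (hδ2 : δ < Real.sqrt γ / M₂)
    (hσ0 : 0 < σ)
    (hσ1 : σ < 2 * (Real.sqrt γ - (M₁ * M₂ + M₁ * M₃ + M₂) * δ - M₁ * M₃) /
      ((2 * M₁ + 1) * δ ^ 2 + 2 * (1 + M₁) * δ + 1))
    (hσ2 : σ < 2 * (Real.sqrt γ - M₂ * δ) / (δ + 1) ^ 2)
    (hσ3 : σ < Real.sqrt θ /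
      (Real.sqrt (2 * ((MeasureTheory.volume Ω).toReal + 1)) * (δ + 1)))
    (hσ4 : σ < θ / (4 * M₂ * (δ + 1) * ((MeasureTheory.volume Ω).toReal + 1)))
    (hR : ContDiff ℝ 1 R)
    (hRapprox : ∀ x ∈ Ω, |H x - R x| < δ * σ)
    (hRgrad : ∀ x ∈ Ω, ‖gradient H x - gradient R x‖ < δ * σ) :
    ∀ x ∈ Ω,
      (inner ℝ (gradient (fun y => (R y - σ) ^ 2) x) (f x) : ℝ) < -((R x - σ) ^ 2 - γ) ∧
      (R x - σ) ^ 2 < H x ^ 2 ∧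
      H x ^ 2 - (R x - σ) ^ 2 < θ / ((MeasureTheory.volume Ω).toReal + 1) :=
  sos_squared_approximation_estimates_general Ω f H R γ θ δ σ M₁ M₂ M₃ hΩ hf hγ hH hHlb hLie hM1 hM2
    hM3 hδ0 hδ2 hσ0 hσ1 hσ2 hσ3 hσ4 hR hRapprox hRgrad
end

section
/- Let f : ℝⁿ → ℝⁿ be a polynomial vector field with solution map φ of the ODE ẋ = f(x). Suppose A* ⊂ ℝⁿ is the minimal attractor set of the ODE, σ > 0, and Ω ⊂ ℝⁿ is a compact set with B(A*,σ) ⊆ Ω and Ω ⊂ BOA_f(A*), where Ω = {x ∈ ℝⁿ : g_Ω(x) ≥ 0} and ∂Ω = {x ∈ ℝⁿ : g_Ω(x) = 0} for a polynomial g_Ω. Let α > 0 and let J be a sum-of-squares polynomial for which there exist a sum-of-squares polynomial s₀ and a polynomial p₀ such that k₀(x) := −∇J(x)ᵀ f(x) − (J(x) − 1) − s₀(x)g_Ω(x) and k₁(x) := (J(x) − 1 − α) − p₀(x)g_Ω(x) are both sum-of-squares polynomials. Then {x ∈ Ω : J(x) ≤ 1} is a stable compact attractor set of the ODE and A* ⊆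 {x ∈ Ω : J(x) ≤ 1}. -/
/-!
The certificate `k₀` gives `d/dt J ≤ 1 - J` along trajectories inside `Ω`, so `J - 1` decays
like `e^{-t}` there (Grönwall), while `k₁` gives `J ≥ 1 + α` on `∂Ω`. Hence a trajectory starting
in `Ω` below the level `1 + α` never reaches `∂Ω`, and the sublevel set `{x ∈ Ω | J x ≤ 1}`
attracts and is stable. Its intersection with `A*` is again an attractor; it is nonempty since at
a minimum point of `J` on the invariant set `A*` the decay forces `J ≤ 1`. Minimality of `A*`
then gives `A* ⊆ {J ≤ 1}`.
-/

open Set Filter MeasureTheory Metric Topology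

noncomputable section

/-- The basin of attraction of the set `A` under the solution map `φ`. -/
def BOA {n : ℕ} (φ : EuclideanSpace ℝ (Fin n) → ℝ → EuclideanSpace ℝ (Fin n))
    (A : Set (EuclideanSpace ℝ (Fin n))) : Set (EuclideanSpace ℝ (Fin n)) :=
  {x | Filter.Tendsto (fun t => Metric.infDist (φ x t) A) Filter.atTop (nhds 0)}

/-- `p` is a sum-of-squares polynomial. -/
def IsSOS {n : ℕ} (p : MvPolynomial (Fin n) ℝ) : Prop :=
  ∃ (k : ℕ) (q : Fin k → MvPolynomial (Fin n) ℝ), p = ∑ i, (q i) ^ 2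

/-- Evaluation of a polynomial at a point of Euclidean space. -/
def pEval {n : ℕ} (p : MvPolynomial (Fin n) ℝ) (x : EuclideanSpace ℝ (Fin n)) : ℝ :=
  MvPolynomial.eval (fun i => x i) p

/-- The polynomial vector field determined by an `n`-tuple of polynomials. -/
def polyField {n : ℕ} (F : Fin n → MvPolynomial (Fin n) ℝ)
    (x : EuclideanSpace ℝ (Fin n)) : EuclideanSpace ℝ (Fin n) :=
  WithLp.toLp 2 (fun i => pEval (F i) x)

section MetricSpace

variable {X : Type*} [PseudoMetricSpace X]

theorem IsCompact.exists_thickening_inter_subset {A S : Set X} (hA : IsCompact A)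
    (hS : IsClosed S) {ε : ℝ} (hε : 0 < ε) :
    ∃ η > 0, thickening η A ∩ thickening η S ⊆ thickening ε (A ∩ S) := by
  set U := thickening (ε / 2) (A ∩ S)
  have hdisj : Disjoint (A \ U) S := by
    refine Set.disjoint_left.2 fun x hx hxS => hx.2 ?_
    exact self_subset_thickening (half_pos hε) _ ⟨hx.1, hxS⟩
  obtain ⟨δ, hδ, hsep⟩ := hdisj.exists_thickenings (hA.diff isOpen_thickening) hS
  refine ⟨min δ (ε / 2), lt_min hδ (half_pos hε), fun z ⟨hzA, hzS⟩ => ?_⟩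
  have hzA' : z ∈ thickening (min δ (ε / 2)) (A \ U) ∪ thickening (min δ (ε / 2)) U := by
    rw [← thickening_union, sdiff_union_self]
    exact thickening_subset_of_subset _ subset_union_left hzA
  rcases hzA' with hz | hz
  · exact (Set.disjoint_left.1 hsep (thickening_mono (min_le_left _ _) _ hz)
      (thickening_mono (min_le_left _ _) _ hzS)).elim
  · refine thickening_mono ?_ _ (thickening_thickening_subset _ _ _ hz)
    linarith [min_le_right δ (ε / 2)]

theorem IsCompact.exists_sep_lt_subset_thickening {K : Set X} (hK : IsCompact K) {V : X → ℝ}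
    (hV : ContinuousOn V K) (c : ℝ) {ε : ℝ} (hε : 0 < ε) :
    ∃ η > 0, {x ∈ K | V x < c + η} ⊆ thickening ε {x ∈ K | V x ≤ c} := by
  set U := thickening ε {x ∈ K | V x ≤ c}
  have hlt : ∀ x ∈ K \ U, c < V x := fun x hx =>
    not_le.1 fun hxc => hx.2 (self_subset_thickening hε _ ⟨hx.1, hxc⟩)
  obtain ⟨a, hca, ha⟩ := (hK.diff isOpen_thickening).exists_forall_le' (hV.mono sdiff_subset) hlt
  refine ⟨a - c, sub_pos.2 hca, fun x hx => ?_⟩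
  by_contra hxU
  linarith [ha x ⟨hx.1, hxU⟩, hx.2]

end MetricSpace

theorem Real.mul_exp_neg_le_max (a : ℝ) {t : ℝ} (ht : 0 ≤ t) : a * Real.exp (-t) ≤ max a 0 := by
  have h1 : Real.exp (-t) ≤ 1 := Real.exp_le_one_iff.2 (neg_nonpos.2 ht)
  rcases le_total a 0 with ha | ha
  · exact (mul_nonpos_of_nonpos_of_nonneg ha (Real.exp_pos _).le).trans (le_max_right _ _)
  · exact (mul_le_of_le_one_right ha h1).trans (le_max_left _ _)

theorem sub_le_mul_exp_neg_of_hasDerivWithinAt {u u' : ℝ → ℝ} {c t : ℝ} (ht : 0 ≤ t)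
    (hu : ∀ s ∈ Icc 0 t, HasDerivWithinAt u (u' s) (Ici 0) s)
    (hu' : ∀ s ∈ Ico 0 t, u' s ≤ c - u s) :
    u t - c ≤ (u 0 - c) * Real.exp (-t) := by
  have hcont : ContinuousOn (fun s => u s - c) (Icc 0 t) := fun s hs =>
    ((hu s hs).continuousWithinAt.mono Icc_subset_Ici_self).sub continuousWithinAt_const
  have := le_gronwallBound_of_liminf_deriv_right_le (f' := u') (δ := u 0 - c) (K := -1) (ε := 0)
    hcont (fun s hs r hr => ((hu s (Ico_subset_Icc_self hs)).mono
      (Ici_subset_Ici.2 hs.1)).sub_const c |>.liminf_right_slope_le hr) le_rfl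
    (fun s hs => by linarith [hu' s hs]) t ⟨ht, le_rfl⟩
  simpa [gronwallBound_ε0] using this

section Attractor

variable {n : ℕ} {φ : EuclideanSpace ℝ (Fin n) → ℝ → EuclideanSpace ℝ (Fin n)}
  {A S K U : Set (EuclideanSpace ℝ (Fin n))}

theorem IsAttractor.inter (hA : IsAttractor φ A) (hS : IsAttractor φ S) (hne : (A ∩ S).Nonempty) :
    IsAttractor φ (A ∩ S) := by
  obtain ⟨hAc, hAne, hAinv, hAattr, hAstab⟩ := hA
  obtain ⟨hSc, hSne, hSinv, hSattr, hSstab⟩ := hS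
  have hnear : ∀ ε > 0, ∃ η > 0, ∀ z, infDist z A < η → infDist z S < η →
      infDist z (A ∩ S) < ε := by
    intro ε hε
    obtain ⟨η, hη, hsub⟩ := hAc.exists_thickening_inter_subset hSc.isClosed hε
    exact ⟨η, hη, fun z hzA hzS => (mem_thickening_iff_infDist_lt hne).1
      (hsub ⟨(mem_thickening_iff_infDist_lt hAne).2 hzA,
        (mem_thickening_iff_infDist_lt hSne).2 hzS⟩)⟩
  refine ⟨hAc.inter_right hSc.isClosed, hne,
    fun x hx t ht => ⟨hAinv x hx.1 t ht, hSinv x hx.2 t ht⟩, ?_, ?_⟩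
  · rintro x ⟨hxA, hxS⟩
    obtain ⟨δA, hδA, hA⟩ := hAattr x hxA
    obtain ⟨δS, hδS, hS⟩ := hSattr x hxS
    refine ⟨min δA δS, lt_min hδA hδS, fun ε hε => ?_⟩
    obtain ⟨η, hη, hnear⟩ := hnear ε hε
    obtain ⟨TA, hTA, hA⟩ := hA η hη
    obtain ⟨TS, hTS, hS⟩ := hS η hη
    refine ⟨max TA TS, hTA.trans (le_max_left _ _), fun y hy t ht => hnear _ ?_ ?_⟩
    · exact hA y (ball_subset_ball (min_le_left _ _) hy) t ((le_max_left _ _).trans ht)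
    · exact hS y (ball_subset_ball (min_le_right _ _) hy) t ((le_max_right _ _).trans ht)
  · intro ε hε
    obtain ⟨η, hη, hnear⟩ := hnear ε hε
    obtain ⟨δA, hδA, hA⟩ := hAstab η hη
    obtain ⟨δS, hδS, hS⟩ := hSstab η hη
    refine ⟨min δA δS, lt_min hδA hδS, fun x hx t ht => hnear _ ?_ ?_⟩
    · exact hA x (thickening_mono (min_le_left _ _) _
        (thickening_subset_of_subset _ inter_subset_left hx)) t ht
    · exact hS x (thickening_mono (min_le_right _ _) _
        (thickening_subset_of_subset _ inter_subset_right hx)) t ht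

theorem IsMinimalAttractor.subset_of_isAttractor (hA : IsMinimalAttractor φ A)
    (hS : IsAttractor φ S) (hne : (A ∩ S).Nonempty) : A ⊆ S := by
  by_contra hAS
  exact hA.2 _ (hA.1.inter hS hne) ⟨inter_subset_left, fun h => hAS (h.trans inter_subset_right)⟩

theorem isAttractor_sep_of_exp_decay {V : EuclideanSpace ℝ (Fin n) → ℝ} {c : ℝ}
    (hK : IsCompact K) (hV : Continuous V) (hU : IsOpen U) (hSU : {x ∈ K | V x ≤ c} ⊆ U)
    (hne : {x ∈ K | V x ≤ c}.Nonempty)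
    (hdecay : ∀ y ∈ U, ∀ t ≥ 0, φ y t ∈ K ∧ V (φ y t) - c ≤ (V y - c) * Real.exp (-t)) :
    IsAttractor φ {x ∈ K | V x ≤ c} := by
  set S := {x ∈ K | V x ≤ c}
  have hnear : ∀ ε > 0, ∃ η > 0, ∀ y ∈ U, ∀ t ≥ 0, (V y - c) * Real.exp (-t) < η →
      infDist (φ y t) S < ε := by
    intro ε hε
    obtain ⟨η, hη, hsub⟩ := hK.exists_sep_lt_subset_thickening hV.continuousOn c hε
    refine ⟨η, hη, fun y hy t ht hlt => ?_⟩
    obtain ⟨hyK, hyV⟩ := hdecay y hy t ht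
    exact (mem_thickening_iff_infDist_lt hne).1 (hsub ⟨hyK, by linarith⟩)
  have hSc : IsCompact S := hK.inter_right (isClosed_le hV continuous_const)
  refine ⟨hSc, hne, ?_, ?_, ?_⟩
  · intro x hx t ht
    obtain ⟨hxK, hxV⟩ := hdecay x (hSU hx) t ht
    have := Real.mul_exp_neg_le_max (V x - c) ht
    exact ⟨hxK, by linarith [max_eq_right (sub_nonpos.2 hx.2)]⟩
  · intro x hx
    have hxU : x ∈ U ∩ {y | V y < c + 1} := ⟨hSU hx, show V x < c + 1 by linarith [hx.2]⟩
    obtain ⟨δ, hδ, hball⟩ :=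
      Metric.isOpen_iff.1 (hU.inter (isOpen_lt hV continuous_const)) x hxU
    refine ⟨δ, hδ, fun ε hε => ?_⟩
    obtain ⟨η, hη, hnear⟩ := hnear ε hε
    obtain ⟨T, hT⟩ := eventually_atTop.1 ((tendsto_order.1 Real.tendsto_exp_neg_atTop_nhds_zero).2
      η hη |>.and (eventually_ge_atTop 0))
    refine ⟨T, (hT T le_rfl).2, fun y hy t ht => hnear y (hball hy).1 t (hT t ht).2 ?_⟩
    calc (V y - c) * Real.exp (-t) ≤ Real.exp (-t) :=
          mul_le_of_le_one_left (Real.exp_pos _).le (by linarith [(hball hy).2.out])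
      _ < η := (hT t ht).1
  · intro ε hε
    obtain ⟨η, hη, hnear⟩ := hnear ε hε
    obtain ⟨δ, hδ, hsub⟩ := hSc.exists_thickening_subset_open
      (hU.inter (isOpen_lt hV continuous_const)) (t := U ∩ {y | V y < c + η})
      fun x hx => ⟨hSU hx, show V x < c + η by linarith [hx.2]⟩
    refine ⟨δ, hδ, fun x hx t ht => hnear x (hsub hx).1 t ht ?_⟩
    have := Real.mul_exp_neg_le_max (V x - c) ht
    have : max (V x - c) 0 < η := max_lt (by linarith [(hsub hx).2.out]) hη
    linarith

theorem exists_le_of_exp_decay {V : EuclideanSpace ℝ (Fin n) → ℝ} {c : ℝ} (hA : IsCompact A)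
    (hne : A.Nonempty) (hV : ContinuousOn V A) (hinv : ∀ x ∈ A, ∀ t ≥ 0, φ x t ∈ A)
    (hdecay : ∀ x ∈ A, ∀ t ≥ 0, V (φ x t) - c ≤ (V x - c) * Real.exp (-t)) :
    ∃ x ∈ A, V x ≤ c := by
  obtain ⟨x, hxA, hmin⟩ := hA.exists_isMinOn hne hV
  refine ⟨x, hxA, ?_⟩
  have hle : V x ≤ V (φ x 1) := hmin (hinv x hxA 1 zero_le_one)
  have hexp : Real.exp (-1) < 1 := Real.exp_lt_one_iff.2 (by norm_num)
  -- `V x ≤ V (φ x 1) ≤ c + (V x - c) e⁻¹`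
  nlinarith [hdecay x hxA 1 zero_le_one]

end Attractor

theorem mem_interior_of_lt_of_forall_frontier {X : Type*} [TopologicalSpace X] {Ω : Set X}
    {V : X → ℝ} {a : ℝ} (hΩ : IsClosed Ω) (hfr : ∀ y ∈ frontier Ω, a ≤ V y) {x : X}
    (hx : x ∈ Ω) (hxV : V x < a) : x ∈ interior Ω := by
  by_contra hint
  exact (hfr x (hΩ.frontier_eq ▸ ⟨hx, hint⟩)).not_gt hxV

section SolutionMap

variable {n : ℕ} {f : EuclideanSpace ℝ (Fin n) → EuclideanSpace ℝ (Fin n)}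
  {φ : EuclideanSpace ℝ (Fin n) → ℝ → EuclideanSpace ℝ (Fin n)}
  {K Ω : Set (EuclideanSpace ℝ (Fin n))}

theorem IsSolutionMap.continuousOn (hφ : IsSolutionMap f φ) (x : EuclideanSpace ℝ (Fin n)) :
    ContinuousOn (φ x) (Ici 0) := fun t ht => (hφ.1 x t ht).continuousWithinAt

theorem IsSolutionMap.mem_of_eventually_mem (hφ : IsSolutionMap f φ) (hK : IsClosed K)
    (hloc : ∀ y ∈ K, ∀ᶠ r in 𝓝[>] 0, φ y r ∈ K) {x : EuclideanSpace ℝ (Fin n)} (hx : x ∈ K)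
    {t : ℝ} (ht : 0 ≤ t) : φ x t ∈ K := by
  have hclosed : IsClosed ({s | φ x s ∈ K} ∩ Icc 0 t) := by
    rw [inter_comm]
    exact ((hφ.continuousOn x).mono Icc_subset_Ici_self).preimage_isClosed_of_isClosed
      isClosed_Icc hK
  refine hclosed.Icc_subset_of_forall_mem_nhdsWithin (by simpa [hφ.2.1 x] using hx)
    (fun τ ⟨hτK, hτ⟩ => ?_) ⟨ht, le_rfl⟩
  have hshift : Tendsto (fun s => s - τ) (𝓝[>] τ) (𝓝[>] 0) :=
    tendsto_nhdsWithin_iff.2 ⟨tendsto_nhdsWithin_of_tendsto_nhds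
      (by simpa using (continuous_sub_right τ).tendsto τ),
      eventually_nhdsWithin_of_forall fun s (hs : τ < s) => sub_pos.2 hs⟩
  filter_upwards [hshift.eventually (hloc _ hτK), self_mem_nhdsWithin] with s hs hτs
  have := hφ.2.2 x τ hτ.1 (s - τ) (sub_nonneg.2 (le_of_lt hτs))
  rw [add_sub_cancel] at this
  rwa [← this]

variable {V L : EuclideanSpace ℝ (Fin n) → ℝ} {c : ℝ}

theorem IsSolutionMap.sub_le_mul_exp_neg (hφ : IsSolutionMap f φ)
    (hVL : ∀ x, ∀ t ≥ 0, HasDerivWithinAt (fun s => V (φ x s)) (L (φ x t)) (Ici 0) t)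
    (hL : ∀ y ∈ Ω, L y ≤ c - V y) {x : EuclideanSpace ℝ (Fin n)} {t : ℝ} (ht : 0 ≤ t)
    (hin : ∀ s ∈ Icc 0 t, φ x s ∈ Ω) :
    V (φ x t) - c ≤ (V x - c) * Real.exp (-t) := by
  simpa [hφ.2.1 x] using sub_le_mul_exp_neg_of_hasDerivWithinAt ht
    (fun s hs => hVL x s hs.1) (fun s hs => hL _ (hin s (Ico_subset_Icc_self hs)))

theorem IsSolutionMap.mem_and_sub_le_mul_exp_neg (hφ : IsSolutionMap f φ)
    (hVL : ∀ x, ∀ t ≥ 0, HasDerivWithinAt (fun s => V (φ x s)) (L (φ x t)) (Ici 0) t)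
    (hΩ : IsClosed Ω) (hV : Continuous V) (hL : ∀ y ∈ Ω, L y ≤ c - V y) {α : ℝ}
    (hα : 0 < α) (hfr : ∀ y ∈ frontier Ω, c + α ≤ V y) {x : EuclideanSpace ℝ (Fin n)} (hx : x ∈ Ω)
    (hxV : V x < c + α) {t : ℝ} (ht : 0 ≤ t) :
    φ x t ∈ Ω ∧ V (φ x t) - c ≤ (V x - c) * Real.exp (-t) := by
  -- `{z ∈ Ω | V z ≤ b}` lies in `interior Ω`, so a trajectory can only leave it through a level
  -- above `b`, which the decay estimate forbids.
  set b := max (V x) c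
  have hloc : ∀ y ∈ {z ∈ Ω | V z ≤ b}, ∀ᶠ r in 𝓝[>] 0, φ y r ∈ {z ∈ Ω | V z ≤ b} := by
    rintro y ⟨hyΩ, hyb⟩
    have hint : y ∈ interior Ω := mem_interior_of_lt_of_forall_frontier hΩ hfr hyΩ
      (hyb.trans_lt (max_lt hxV (by linarith)))
    have hnear : ∀ᶠ r in 𝓝[≥] 0, φ y r ∈ interior Ω :=
      (hφ.continuousOn y 0 self_mem_Ici).tendsto.eventually
        (isOpen_interior.mem_nhds ((hφ.2.1 y).symm ▸ hint))
    obtain ⟨u, hu, hIco⟩ := mem_nhdsGE_iff_exists_Ico_subset.1 hnear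
    filter_upwards [Ioo_mem_nhdsGT hu] with r hr
    have hin : ∀ s ∈ Icc 0 r, φ y s ∈ Ω := fun s hs =>
      interior_subset (hIco ⟨hs.1, hs.2.trans_lt hr.2⟩)
    refine ⟨hin r ⟨hr.1.le, le_rfl⟩, ?_⟩
    have := hφ.sub_le_mul_exp_neg hVL hL hr.1.le hin
    have := Real.mul_exp_neg_le_max (V y - c) hr.1.le
    have : max (V y - c) 0 ≤ b - c := max_le (by linarith) (by linarith [le_max_right (V x) c])
    show V (φ y r) ≤ b
    linarith
  have hmem : ∀ s ≥ 0, φ x s ∈ Ω := fun s hs =>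
    (hφ.mem_of_eventually_mem (hΩ.inter (isClosed_le hV continuous_const)) hloc
      ⟨hx, show V x ≤ b from le_max_left _ _⟩ hs).1
  exact ⟨hmem t ht, hφ.sub_le_mul_exp_neg hVL hL ht fun s hs => hmem s hs.1⟩

end SolutionMap

section Polynomial

open MvPolynomial

variable {n : ℕ}

theorem IsSOS.pEval_nonneg {p : MvPolynomial (Fin n) ℝ} (hp : IsSOS p)
    (x : EuclideanSpace ℝ (Fin n)) : 0 ≤ pEval p x := by
  obtain ⟨k, q, rfl⟩ := hp
  simp only [pEval, map_sum, map_pow]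
  exact Finset.sum_nonneg fun i _ => sq_nonneg _

theorem continuous_pEval (p : MvPolynomial (Fin n) ℝ) : Continuous (pEval p) :=
  (continuous_eval p).comp (continuous_pi fun i => (EuclideanSpace.proj (𝕜 := ℝ) i).continuous)

theorem HasDerivWithinAt.pEval_comp {γ : ℝ → EuclideanSpace ℝ (Fin n)}
    {v : EuclideanSpace ℝ (Fin n)} {s : Set ℝ} {t : ℝ} (hγ : HasDerivWithinAt γ v s t)
    (p : MvPolynomial (Fin n) ℝ) :
    HasDerivWithinAt (fun u => pEval p (γ u)) (∑ i, pEval (pderiv i p) (γ t) * v i) s t := by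
  induction p using MvPolynomial.induction_on with
  | C a => simpa [pEval] using hasDerivWithinAt_const t s a
  | add p q hp hq =>
    simp only [pEval, map_add, add_mul, Finset.sum_add_distrib] at hp hq ⊢
    exact hp.fun_add hq
  | mul_X p i hp =>
    have hcoord : HasDerivWithinAt (fun u => γ u i) (v i) s t :=
      (EuclideanSpace.proj (𝕜 := ℝ) i).hasFDerivAt.comp_hasDerivWithinAt t hγ
    have hfun : (fun u => pEval (p * X i) (γ u)) = fun u => pEval p (γ u) * γ u i := by
      funext u; simp [pEval]
    have hderiv : ∑ j, pEval (pderiv j (p * X i)) (γ t) * v j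
        = (∑ j, pEval (pderiv j p) (γ t) * v j) * γ t i + pEval p (γ t) * v i := by
      simp only [pEval, Derivation.leibniz, pderiv_X, smul_eq_mul, map_add, map_mul, map_one,
        eval_X, Pi.single_apply, apply_ite (eval _), map_zero, mul_ite, mul_zero, ite_mul, zero_mul,
        add_mul, Finset.sum_add_distrib, Finset.sum_ite_eq, Finset.mem_univ, if_true,
        Finset.sum_mul]
      rw [add_comm]
      exact congrArg₂ _ (Finset.sum_congr rfl fun j _ => by ring) (by ring)
    rw [hfun, hderiv]
    exact hp.fun_mul hcoord

theorem IsSolutionMap.hasDerivWithinAt_pEval {F : Fin n → MvPolynomial (Fin n) ℝ}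
    {φ : EuclideanSpace ℝ (Fin n) → ℝ → EuclideanSpace ℝ (Fin n)}
    (hφ : IsSolutionMap (polyField F) φ) (p : MvPolynomial (Fin n) ℝ)
    (x : EuclideanSpace ℝ (Fin n)) {t : ℝ} (ht : 0 ≤ t) :
    HasDerivWithinAt (fun s => pEval p (φ x s)) (pEval (∑ i, pderiv i p * F i) (φ x t))
      (Ici 0) t := by
  simpa [pEval, polyField, map_sum] using (hφ.1 x t ht).pEval_comp p

theorem pEval_le_one_sub_of_isSOS {L J s g : MvPolynomial (Fin n) ℝ} (hs : IsSOS s)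
    (hk : IsSOS (-L - (J - 1) - s * g)) {y : EuclideanSpace ℝ (Fin n)} (hy : 0 ≤ pEval g y) :
    pEval L y ≤ 1 - pEval J y := by
  have hk := hk.pEval_nonneg y
  have hsg := mul_nonneg (hs.pEval_nonneg y) hy
  simp only [pEval, map_sub, map_neg, map_mul, map_one] at hk hsg ⊢
  linarith

theorem one_add_le_pEval_of_isSOS {J p g : MvPolynomial (Fin n) ℝ} {α : ℝ}
    (hk : IsSOS ((J - 1 - C α) - p * g)) {y : EuclideanSpace ℝ (Fin n)} (hy : pEval g y = 0) :
    1 + α ≤ pEval J y := by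
  have hk := hk.pEval_nonneg y
  simp only [pEval, map_sub, map_mul, map_one, eval_C] at hk hy ⊢
  rw [hy, mul_zero] at hk
  linarith

end Polynomial

theorem sos_feasible_gives_attractor_general {n : ℕ}
    (F : Fin n → MvPolynomial (Fin n) ℝ)
    (φ : EuclideanSpace ℝ (Fin n) → ℝ → EuclideanSpace ℝ (Fin n))
    (Astar Ω : Set (EuclideanSpace ℝ (Fin n)))
    (gΩ J s₀ p₀ : MvPolynomial (Fin n) ℝ) (σ α : ℝ)
    (hφ : IsSolutionMap (polyField F) φ)
    (hA : IsMinimalAttractor φ Astar)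
    (hσ : 0 < σ)
    (hΩc : IsCompact Ω)
    (hΩeq : Ω = {x | 0 ≤ pEval gΩ x})
    (hΩfr : frontier Ω = {x | pEval gΩ x = 0})
    (hthick : Metric.thickening σ Astar ⊆ Ω)
    (hα : 0 < α)
    (hs₀ : IsSOS s₀)
    (hk₀ : IsSOS (-(∑ i, MvPolynomial.pderiv i J * F i) - (J - 1) - s₀ * gΩ))
    (hk₁ : IsSOS ((J - 1 - MvPolynomial.C α) - p₀ * gΩ)) :
    IsAttractor φ {x ∈ Ω | pEval J x ≤ 1} ∧ Astar ⊆ {x ∈ Ω | pEval J x ≤ 1} := by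
  have hJ := continuous_pEval J
  have hL : ∀ y ∈ Ω, pEval (∑ i, MvPolynomial.pderiv i J * F i) y ≤ 1 - pEval J y :=
    fun y hy => pEval_le_one_sub_of_isSOS hs₀ hk₀ (by rwa [hΩeq] at hy)
  have hfr : ∀ y ∈ frontier Ω, 1 + α ≤ pEval J y :=
    fun y hy => one_add_le_pEval_of_isSOS hk₁ (by rwa [hΩfr] at hy)
  have hVL := hφ.hasDerivWithinAt_pEval J
  have hAΩ : Astar ⊆ Ω := (self_subset_thickening hσ Astar).trans hthick
  obtain ⟨hAc, hAne, hAinv, -⟩ := hA.1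
  obtain ⟨x, hxA, hxJ⟩ := exists_le_of_exp_decay hAc hAne hJ.continuousOn hAinv
    fun x hx t ht => hφ.sub_le_mul_exp_neg hVL hL ht
      fun s hs => hAΩ (hAinv x hx s hs.1)
  have hne : (Astar ∩ {x ∈ Ω | pEval J x ≤ 1}).Nonempty := ⟨x, hxA, hAΩ hxA, hxJ⟩
  have hS : IsAttractor φ {x ∈ Ω | pEval J x ≤ 1} :=
    isAttractor_sep_of_exp_decay hΩc hJ (isOpen_interior.inter (isOpen_lt hJ continuous_const))
      (fun y hy => ⟨mem_interior_of_lt_of_forall_frontier hΩc.isClosed hfr hy.1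
        (by linarith [hy.2]), show pEval J y < 1 + α by linarith [hy.2]⟩)
      (hne.mono inter_subset_right) fun y hy t ht =>
        hφ.mem_and_sub_le_mul_exp_neg hVL hΩc.isClosed hJ hL hα hfr (interior_subset hy.1) hy.2 ht
  exact ⟨hS, hA.subset_of_isAttractor hS hne⟩

/-- parts 1 and 2 of Cor. 14 of the paper: if `A*` is the minimal attractor
set of the polynomial ODE `ẋ = f(x)`, `B(A*,σ) ⊆ Ω ⊆ BOA_f(A*)` with
`Ω = {g_Ω ≥ 0}` compact and `∂Ω = {g_Ω = 0}`, and `J` is an SOS polynomial admitting SOS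
certificates `k₀ = −∇Jᵀf − (J−1) − s₀ g_Ω` and `k₁ = (J−1−α) − p₀ g_Ω` with `s₀` SOS,
then `{x ∈ Ω : J(x) ≤ 1}` is a stable compact attractor set containing `A*`. -/
theorem sos_feasible_gives_attractor {n : ℕ}
    (F : Fin n → MvPolynomial (Fin n) ℝ)
    (φ : EuclideanSpace ℝ (Fin n) → ℝ → EuclideanSpace ℝ (Fin n))
    (Astar Ω : Set (EuclideanSpace ℝ (Fin n)))
    (gΩ J s₀ p₀ : MvPolynomial (Fin n) ℝ) (σ α : ℝ)
    (hφ : IsSolutionMap (polyField F) φ)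
    (hA : IsMinimalAttractor φ Astar)
    (hσ : 0 < σ)
    (hΩc : IsCompact Ω)
    (hΩeq : Ω = {x | 0 ≤ pEval gΩ x})
    (hΩfr : frontier Ω = {x | pEval gΩ x = 0})
    (hthick : Metric.thickening σ Astar ⊆ Ω)
    (hΩBOA : Ω ⊆ BOA φ Astar)
    (hα : 0 < α)
    (hJ : IsSOS J) (hs₀ : IsSOS s₀)
    (hk₀ : IsSOS (-(∑ i, MvPolynomial.pderiv i J * F i) - (J - 1) - s₀ * gΩ))
    (hk₁ : IsSOS ((J - 1 - MvPolynomial.C α) - p₀ * gΩ)) :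
    IsAttractor φ {x ∈ Ω | pEval J x ≤ 1} ∧ Astar ⊆ {x ∈ Ω | pEval J x ≤ 1} :=
  sos_feasible_gives_attractor_general F φ Astar Ω gΩ J s₀ p₀ σ α hφ hA hσ hΩc hΩeq hΩfr hthick hα
    hs₀ hk₀ hk₁
end
end

section
/- Let Λ ⊂ ℝⁿ be a bounded measurable set, let V : Λ → ℝ be measurable with ∫_Λ |V| dμ < ∞, and let {J_d}_{d∈ℕ} be measurable functions on Λ with ∫_Λ |J_d| dμ < ∞ satisfying: (1) J_d(x) ≤ V(x) for all x ∈ Λ and all d ∈ ℕ; (2) lim_{d→∞} ∫_Λ |V(x) − J_d(x)| dx = 0. Then for every γ ∈ ℝ, lim_{d→∞} D_V({x ∈ Λ : V(x) ≤ γ}, {x ∈ Λ : J_d(x) ≤ γ}) = 0. -/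
/-!
Since `J_d ≤ V`, the symmetric difference of the sublevel sets is `{J_d ≤ γ < V}`. For `ε > 0`
it lies in the band `{γ < V ≤ γ + ε}` together with `{ε ≤ V - J_d}`. As `Λ` has finite measure,
the band shrinks to a null set as `ε → 0`, while `L¹` convergence implies convergence in measure,
so the measure of the second set tends to `0` as `d → ∞`.
-/

open Set Filter MeasureTheory Topology
open scoped symmDiff

namespace MeasureTheory

variable {α ι : Type*} [MeasurableSpace α] {μ : Measure α}

theorem tendstoInMeasure_of_tendsto_integral_abs_sub {l : Filter ι} {f : α → ℝ} {g : ι → α → ℝ}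
    (hf : Integrable f μ) (hg : ∀ i, Integrable (g i) μ)
    (hfg : Tendsto (fun i => ∫ x, |f x - g i x| ∂μ) l (𝓝 0)) :
    TendstoInMeasure μ g l f := by
  refine tendstoInMeasure_of_tendsto_eLpNorm one_ne_zero (fun i => (hg i).aestronglyMeasurable)
    hf.aestronglyMeasurable ?_
  have h_eLpNorm (i : ι) : eLpNorm (g i - f) 1 μ = ENNReal.ofReal (∫ x, |f x - g i x| ∂μ) := by
    rw [eLpNorm_one_eq_lintegral_enorm, ← ofReal_integral_norm_eq_lintegral_enorm ((hg i).sub hf)]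
    simp [Real.norm_eq_abs, abs_sub_comm]
  simpa [h_eLpNorm] using ENNReal.tendsto_ofReal hfg

theorem tendsto_measure_preimage_Ioc_nhdsGT [IsFiniteMeasure μ] {f : α → ℝ}
    (hf : AEMeasurable f μ) (γ : ℝ) :
    Tendsto (fun ε => μ (f ⁻¹' Ioc γ (γ + ε))) (𝓝[>] 0) (𝓝 0) := by
  have h_empty : ⋂ ε > (0 : ℝ), f ⁻¹' Ioc γ (γ + ε) = ∅ := by
    refine eq_empty_of_forall_notMem fun x hx => ?_
    simp only [mem_iInter, mem_preimage, mem_Ioc] at hx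
    have hγ := (hx 1 one_pos).1
    linarith [(hx ((f x - γ) / 2) (by linarith)).2]
  have h := tendsto_measure_biInter_gt (μ := μ) (s := fun ε => f ⁻¹' Ioc γ (γ + ε)) (a := 0)
    (fun _ _ => hf.nullMeasurable measurableSet_Ioc)
    (fun _ _ _ hij => preimage_mono (Ioc_subset_Ioc_right (by linarith)))
    ⟨1, one_pos, measure_ne_top μ _⟩
  rwa [h_empty, measure_empty] at h

theorem TendstoInMeasure.tendsto_measure_le_lt [IsFiniteMeasure μ] {l : Filter ι} {f : α → ℝ}
    {g : ι → α → ℝ} (hg : TendstoInMeasure μ g l f) (hf : AEMeasurable f μ) (γ : ℝ) :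
    Tendsto (fun i => μ {x | g i x ≤ γ ∧ γ < f x}) l (𝓝 0) := by
  rw [ENNReal.tendsto_nhds_zero]
  intro δ hδ
  have hδ2 : 0 < δ / 2 := ENNReal.half_pos hδ.ne'
  obtain ⟨ε, h_band, hε⟩ : ∃ ε, μ (f ⁻¹' Ioc γ (γ + ε)) < δ / 2 ∧ 0 < ε :=
    (((tendsto_measure_preimage_Ioc_nhdsGT hf γ).eventually (gt_mem_nhds hδ2)).and
      self_mem_nhdsWithin).exists
  have h_far := (tendstoInMeasure_iff_dist.1 hg ε hε).eventually (gt_mem_nhds hδ2)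
  filter_upwards [h_far] with i hi
  have h_cover : {x | g i x ≤ γ ∧ γ < f x} ⊆
      f ⁻¹' Ioc γ (γ + ε) ∪ {x | ε ≤ dist (g i x) (f x)} := by
    rintro x ⟨hgx, hfx⟩
    by_cases h_near : f x ≤ γ + ε
    · exact Or.inl ⟨hfx, h_near⟩
    · refine Or.inr (show ε ≤ dist (g i x) (f x) from ?_)
      rw [Real.dist_eq, abs_sub_comm]
      exact le_abs.2 (Or.inl (by linarith))
  calc μ {x | g i x ≤ γ ∧ γ < f x}
      ≤ μ (f ⁻¹' Ioc γ (γ + ε) ∪ {x | ε ≤ dist (g i x) (f x)}) := measure_mono h_cover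
    _ ≤ μ (f ⁻¹' Ioc γ (γ + ε)) + μ {x | ε ≤ dist (g i x) (f x)} := measure_union_le _ _
    _ ≤ δ / 2 + δ / 2 := add_le_add h_band.le hi.le
    _ = δ := ENNReal.add_halves δ

end MeasureTheory

theorem Set.sep_le_symmDiff_sep_le_of_le {α : Type*} {Λ : Set α} {f g : α → ℝ}
    (hgf : ∀ x ∈ Λ, g x ≤ f x) (γ : ℝ) :
    {x ∈ Λ | f x ≤ γ} ∆ {x ∈ Λ | g x ≤ γ} = {x | g x ≤ γ ∧ γ < f x} ∩ Λ := by
  ext x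
  simp only [mem_symmDiff, mem_inter_iff, mem_ofPred_eq]
  have := hgf x
  grind

theorem sublevel_convergence_of_L1_general {n : ℕ}
    (Λ : Set (EuclideanSpace ℝ (Fin n)))
    (V : EuclideanSpace ℝ (Fin n) → ℝ)
    (J : ℕ → EuclideanSpace ℝ (Fin n) → ℝ)
    (hΛb : Bornology.IsBounded Λ)
    (hV : MeasureTheory.IntegrableOn V Λ)
    (hJ : ∀ d, MeasureTheory.IntegrableOn (J d) Λ)
    (hle : ∀ d, ∀ x ∈ Λ, J d x ≤ V x)
    (hL1 : Filter.Tendsto (fun d => ∫ x in Λ, |V x - J d x|) Filter.atTop (nhds 0)) :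
    ∀ γ : ℝ,
      Filter.Tendsto
        (fun d => MeasureTheory.volume
          (({x ∈ Λ | V x ≤ γ} \ {x ∈ Λ | J d x ≤ γ}) ∪
            ({x ∈ Λ | J d x ≤ γ} \ {x ∈ Λ | V x ≤ γ})))
        Filter.atTop (nhds 0) := by
  intro γ
  have : IsFiniteMeasure (volume.restrict Λ) := isFiniteMeasure_restrict.2 hΛb.measure_lt_top.ne
  have h_meas := (tendstoInMeasure_of_tendsto_integral_abs_sub hV hJ hL1).tendsto_measure_le_lt
    hV.aemeasurable γ
  refine tendsto_of_tendsto_of_tendsto_of_le_of_le tendsto_const_nhds h_meas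
    (fun _ => zero_le) fun d => ?_
  rw [← Set.symmDiff_def, Set.sep_le_symmDiff_sep_le_of_le (hle d)]
  exact Measure.le_restrict_apply _ _

/-- Prop. 19 of the paper: if integrable functions `J_d ≤ V` on a bounded
measurable set `Λ` converge to `V` in `L¹(Λ)`, then for every `γ ∈ ℝ` the `γ`-sublevel sets of
`J_d` converge to the `γ`-sublevel set of `V` in the volume metric. -/
theorem sublevel_convergence_of_L1 {n : ℕ}
    (Λ : Set (EuclideanSpace ℝ (Fin n)))
    (V : EuclideanSpace ℝ (Fin n) → ℝ)
    (J : ℕ → EuclideanSpace ℝ (Fin n) → ℝ)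
    (hΛb : Bornology.IsBounded Λ) (hΛm : MeasurableSet Λ)
    (hV : MeasureTheory.IntegrableOn V Λ)
    (hJ : ∀ d, MeasureTheory.IntegrableOn (J d) Λ)
    (hle : ∀ d, ∀ x ∈ Λ, J d x ≤ V x)
    (hL1 : Filter.Tendsto (fun d => ∫ x in Λ, |V x - J d x|) Filter.atTop (nhds 0)) :
    ∀ γ : ℝ,
      Filter.Tendsto
        (fun d => MeasureTheory.volume
          (({x ∈ Λ | V x ≤ γ} \ {x ∈ Λ | J d x ≤ γ}) ∪
            ({x ∈ Λ | J d x ≤ γ} \ {x ∈ Λ | V x ≤ γ})))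
        Filter.atTop (nhds 0) :=
  sublevel_convergence_of_L1_general Λ V J hΛb hV hJ hle hL1
end

section
/- Let f : ℝⁿ → ℝⁿ be continuously differentiable with solution map φ of the ODE ẋ = f(x), and let A ⊂ ℝⁿ be a nonempty compact set. Suppose there exist a continuous function V : ℝⁿ → ℝ and a compact set Ω ⊂ ℝⁿ such that: (1) A ⊆ Ω° (the interior of Ω); (2) V(x) = 0 for x ∈ A and V(x) > 0 for x ∈ Ω∖A; (3) V(φ(x,t)) < V(x) for every x ∈ Ω∖A and every t ∈ {s > 0 : φ(x,q) ∈ Ω for all q ∈ [0,s]}. Then A is a stable compact attractor set of the ODE. -/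
open Set Filter MeasureTheory Metric Topology

noncomputable section

/-- sufficiency direction of Thm. 1, Bhatia–Szegő: if `A` is a nonempty
compact set, `V` is continuous and vanishes exactly on `A` within a compact set `Ω` with
`A ⊆ Ω°`, and `V` strictly decreases along solutions that remain in `Ω` and start in `Ω∖A`,
then `A` is a stable compact attractor set. -/
theorem bhatia_lyapunov_attractor {n : ℕ}
    (f : EuclideanSpace ℝ (Fin n) → EuclideanSpace ℝ (Fin n))
    (φ : EuclideanSpace ℝ (Fin n) → ℝ → EuclideanSpace ℝ (Fin n))
    (V : EuclideanSpace ℝ (Fin n) → ℝ)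
    (A Ω : Set (EuclideanSpace ℝ (Fin n)))
    (hf : ContDiff ℝ 1 f) (hφ : IsSolutionMap f φ)
    (hAc : IsCompact A) (hAne : A.Nonempty)
    (hV : Continuous V)
    (hΩ : IsCompact Ω)
    (hAint : A ⊆ interior Ω)
    (hVzero : ∀ x ∈ A, V x = 0)
    (hVpos : ∀ x ∈ Ω \ A, 0 < V x)
    (hVdec : ∀ x ∈ Ω \ A, ∀ t : ℝ, 0 < t → (∀ q ∈ Set.Icc (0:ℝ) t, φ x q ∈ Ω) →
      V (φ x t) < V x) :
    IsAttractor φ A := by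
  obtain ⟨hder, hzero, hsemi⟩ := hφ
  have hct : ∀ x, ContinuousOn (φ x) (Ici (0:ℝ)) :=
    fun x t ht => (hder x t ht).continuousWithinAt
  have hAcl : IsClosed A := hAc.isClosed
  -- cthickening membership via infDist
  have hcth : ∀ (z : EuclideanSpace ℝ (Fin n)) (δ : ℝ), 0 ≤ δ →
      (z ∈ cthickening δ A ↔ infDist z A ≤ δ) := by
    intro z δ hδ
    rw [mem_cthickening_iff, ENNReal.le_ofReal_iff_toReal_le (Metric.infEdist_ne_top hAne) hδ]
    rfl
  -- Lemma A : points of A stay in A while the trajectory remains in Ω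
  have memA : ∀ a ∈ A, ∀ t : ℝ, 0 ≤ t → (∀ q ∈ Icc (0:ℝ) t, φ a q ∈ Ω) → φ a t ∈ A := by
    intro a ha t ht htraj
    by_contra hnot
    set U : Set ℝ := Icc 0 t ∩ (φ a) ⁻¹' A with hU
    have hUc : IsClosed U := by
      have h1 : IsClosed (Ici (0:ℝ) ∩ (φ a) ⁻¹' A) :=
        (hct a).preimage_isClosed_of_isClosed isClosed_Ici hAcl
      have h2 : U = Icc 0 t ∩ (Ici (0:ℝ) ∩ (φ a) ⁻¹' A) := by
        ext u
        simp only [hU, mem_inter_iff, mem_Icc, mem_Ici, mem_preimage]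
        tauto
      rw [h2]; exact isClosed_Icc.inter h1
    have hUne : U.Nonempty := ⟨0, ⟨le_refl 0, ht⟩, by simp [hzero a, ha]⟩
    have hUbdd : BddAbove U := ⟨t, fun u hu => hu.1.2⟩
    set s := sSup U with hs
    have hsU : s ∈ U := hUc.csSup_mem hUne hUbdd
    have hs0 : 0 ≤ s := hsU.1.1
    have hst : s ≤ t := hsU.1.2
    have hsA : φ a s ∈ A := hsU.2
    have hslt : s < t := lt_of_le_of_ne hst (fun h => hnot (h ▸ hsA))
    have hkey : ∀ u ∈ Ioo s t, V (φ a t) < V (φ a u) := by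
      intro u hu
      have hu0 : 0 ≤ u := hs0.trans hu.1.le
      have huΩ : φ a u ∈ Ω := htraj u ⟨hu0, hu.2.le⟩
      have huA : φ a u ∉ A := fun h =>
        absurd (le_csSup hUbdd ⟨⟨hu0, hu.2.le⟩, h⟩) (not_le.2 hu.1)
      have h1 : ∀ q ∈ Icc (0:ℝ) (t - u), φ (φ a u) q ∈ Ω := by
        intro q hq
        rw [hsemi a u hu0 q hq.1]
        exact htraj (u + q) ⟨by linarith [hq.1], by linarith [hq.2]⟩
      have h2 := hVdec (φ a u) ⟨huΩ, huA⟩ (t - u) (by linarith [hu.2]) h1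
      rwa [hsemi a u hu0 (t - u) (by linarith [hu.2]), add_sub_cancel] at h2
    have hVs : V (φ a s) = 0 := hVzero _ hsA
    have hne : (𝓝[Ioo s t] s).NeBot := by
      rw [← mem_closure_iff_nhdsWithin_neBot, closure_Ioo hslt.ne]
      exact ⟨le_refl s, hslt.le⟩
    have htend : Tendsto (fun u => V (φ a u)) (𝓝[Ioo s t] s) (𝓝 0) := by
      have hc : ContinuousWithinAt (fun u => V (φ a u)) (Ici 0) s :=
        hV.continuousAt.comp_continuousWithinAt ((hct a) s hs0)
      have := (hc.mono (fun u (hu : u ∈ Ioo s t) => hs0.trans hu.1.le)).tendsto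
      rwa [hVs] at this
    have hle : V (φ a t) ≤ 0 :=
      ge_of_tendsto htend (eventually_mem_nhdsWithin.mono fun u hu => (hkey u hu).le)
    have : 0 < V (φ a t) := hVpos _ ⟨htraj t ⟨ht, le_refl t⟩, hnot⟩
    linarith
  -- Lemma B : V non-increasing along trajectories staying in Ω
  have Vle : ∀ x ∈ Ω, ∀ t : ℝ, 0 ≤ t → (∀ q ∈ Icc (0:ℝ) t, φ x q ∈ Ω) →
      V (φ x t) ≤ V x := by
    intro x hxΩ t ht htraj
    by_cases hxA : x ∈ A
    · rw [hVzero _ (memA x hxA t ht htraj), hVzero _ hxA]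
    · rcases eq_or_lt_of_le ht with h | h
      · rw [← h, hzero]
      · exact (hVdec x ⟨hxΩ, hxA⟩ t h htraj).le
  -- claim_m
  have claim_m : ∀ ε > (0:ℝ), ∃ m > (0:ℝ), ∀ z ∈ Ω, V z < m → infDist z A < ε := by
    intro ε hε
    set K := Ω ∩ {z | ε ≤ infDist z A} with hK
    have hKc : IsCompact K :=
      hΩ.inter_right (isClosed_le continuous_const (continuous_infDist_pt A))
    by_cases hKne : K.Nonempty
    · obtain ⟨z₀, hz₀K, hz₀min⟩ := hKc.exists_isMinOn hKne hV.continuousOn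
      refine ⟨V z₀, ?_, ?_⟩
      · refine hVpos _ ⟨hz₀K.1, fun hz₀A => ?_⟩
        have := hz₀K.2
        rw [mem_setOf_eq, infDist_zero_of_mem hz₀A] at this
        linarith
      · intro z hzΩ hVz
        by_contra h
        push_neg at h
        exact absurd (hz₀min ⟨hzΩ, h⟩) (by simp only [mem_setOf_eq]; linarith)
    · exact ⟨1, one_pos, fun z hz _ => by
        by_contra h
        exact hKne ⟨z, hz, not_lt.1 h⟩⟩
  -- claim_r
  have claim_r : ∀ m > (0:ℝ), ∃ r > (0:ℝ), ∀ z, infDist z A < r → V z < m := by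
    intro m hm
    have hU : IsOpen (V ⁻¹' Iio m) := isOpen_Iio.preimage hV
    have hAU : A ⊆ V ⁻¹' Iio m := fun a ha => by
      simp only [mem_preimage, mem_Iio, hVzero a ha]; exact hm
    obtain ⟨r, hr, hsub⟩ := hAc.exists_thickening_subset_open hU hAU
    exact ⟨r, hr, fun z hz => hsub ((mem_thickening_iff_infDist_lt hAne).2 hz)⟩

  -- the safety margin around A inside Ω
  obtain ⟨ε₀, hε₀, hsub₀⟩ := hAc.exists_cthickening_subset_open isOpen_interior hAint
  have hΩsub : cthickening ε₀ A ⊆ Ω := hsub₀.trans interior_subset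
  obtain ⟨m₀, hm₀, hm₀p⟩ := claim_m ε₀ hε₀
  -- the invariant compact neighbourhood W
  set W : Set (EuclideanSpace ℝ (Fin n)) :=
    cthickening ε₀ A ∩ {z | V z ≤ m₀ / 2} with hWdef
  have hWΩ : W ⊆ Ω := fun z hz => hΩsub hz.1
  have hWcpt : IsCompact W := (hAc.cthickening).inter_right (isClosed_le hV continuous_const)
  have hAW : A ⊆ W := fun a ha =>
    ⟨self_subset_cthickening A ha, by simp only [mem_setOf_eq, hVzero a ha]; positivity⟩
  -- starting radius r₀ : points within r₀ of A lie in W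
  obtain ⟨r₁, hr₁, hr₁p⟩ := claim_r (m₀ / 2) (by positivity)
  set r₀ := min r₁ ε₀ with hr₀def
  have hr₀ : 0 < r₀ := lt_min hr₁ hε₀
  have hgoodW : ∀ z, infDist z A < r₀ → z ∈ W := by
    intro z hz
    refine ⟨(hcth z ε₀ hε₀.le).2 (le_of_lt (lt_of_lt_of_le hz (min_le_right r₁ ε₀))), ?_⟩
    exact (hr₁p z (lt_of_lt_of_le hz (min_le_left r₁ ε₀))).le
  -- trajectories starting in W remain in the cthickening (hence in Ω)
  have hWtraj : ∀ x ∈ W, ∀ t : ℝ, 0 ≤ t → ∀ q ∈ Icc (0:ℝ) t, φ x q ∈ cthickening ε₀ A := by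
    intro x hx t ht
    by_contra hbad
    push_neg at hbad
    obtain ⟨q₂, hq₂, hq₂n⟩ := hbad
    set D : ℝ → ℝ := fun q => infDist (φ x q) A with hD
    have hDc : ContinuousOn D (Ici 0) := (continuous_infDist_pt A).comp_continuousOn (hct x)
    have hx₀ : infDist x A < ε₀ := by
      apply hm₀p x (hWΩ hx)
      calc V x ≤ m₀ / 2 := hx.2
        _ < m₀ := by linarith
    set B : Set ℝ := Icc 0 t ∩ D ⁻¹' (Ici ε₀) with hBdef
    have hBc : IsClosed B := by
      have h1 : IsClosed (Ici (0:ℝ) ∩ D ⁻¹' (Ici ε₀)) :=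
        hDc.preimage_isClosed_of_isClosed isClosed_Ici isClosed_Ici
      have h2 : B = Icc 0 t ∩ (Ici (0:ℝ) ∩ D ⁻¹' (Ici ε₀)) := by
        ext u
        simp only [hBdef, mem_inter_iff, mem_Icc, mem_Ici, mem_preimage]
        tauto
      rw [h2]; exact isClosed_Icc.inter h1
    have hBne : B.Nonempty := by
      refine ⟨q₂, hq₂, ?_⟩
      simp only [mem_preimage, mem_Ici]
      by_contra h
      push_neg at h
      exact hq₂n ((hcth _ ε₀ hε₀.le).2 h.le)
    have hBbdd : BddBelow B := ⟨0, fun u hu => hu.1.1⟩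
    set t₁ := sInf B with ht₁def
    have ht₁B : t₁ ∈ B := hBc.csInf_mem hBne hBbdd
    have ht₁0 : 0 ≤ t₁ := ht₁B.1.1
    have ht₁pos : 0 < t₁ := by
      rcases eq_or_lt_of_le ht₁0 with h | h
      · exfalso
        have := ht₁B.2
        simp only [mem_preimage, mem_Ici] at this
        rw [← h] at this
        simp only [hD, hzero x] at this
        linarith
      · exact h
    have hbefore : ∀ q ∈ Ico (0:ℝ) t₁, D q < ε₀ := by
      intro q hq
      by_contra h
      push_neg at h
      have : q ∈ B := ⟨⟨hq.1, hq.2.le.trans ht₁B.1.2⟩, by simpa [mem_preimage, mem_Ici] using h⟩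
      exact absurd (csInf_le hBbdd this) (not_le.2 hq.2)
    -- at t₁ the distance is ≤ ε₀ by left continuity
    have hDt₁ : D t₁ ≤ ε₀ := by
      have hne : (𝓝[Ico 0 t₁] t₁).NeBot := by
        rw [← mem_closure_iff_nhdsWithin_neBot, closure_Ico ht₁pos.ne]
        exact ⟨ht₁0, le_refl t₁⟩
      have htend : Tendsto D (𝓝[Ico 0 t₁] t₁) (𝓝 (D t₁)) :=
        ((hDc t₁ ht₁0).mono (fun u (hu : u ∈ Ico 0 t₁) => hu.1)).tendsto
      exact le_of_tendsto htend
        (eventually_mem_nhdsWithin.mono fun u hu => (hbefore u hu).le)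
    -- hence the trajectory stayed in Ω up to t₁, so V decreased and D t₁ < ε₀: contra
    have htrajΩ : ∀ q ∈ Icc (0:ℝ) t₁, φ x q ∈ Ω := by
      intro q hq
      apply hΩsub
      apply (hcth _ ε₀ hε₀.le).2
      rcases eq_or_lt_of_le hq.2 with h | h
      · rw [h]; exact hDt₁
      · exact (hbefore q ⟨hq.1, h⟩).le
    have hVt₁ : V (φ x t₁) ≤ V x := Vle x (hWΩ hx) t₁ ht₁0 htrajΩ
    have : infDist (φ x t₁) A < ε₀ := by
      apply hm₀p _ (htrajΩ t₁ ⟨ht₁0, le_refl t₁⟩)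
      calc V (φ x t₁) ≤ V x := hVt₁
        _ ≤ m₀ / 2 := hx.2
        _ < m₀ := by linarith
    have := ht₁B.2
    simp only [mem_preimage, mem_Ici] at this
    simp only [hD] at *
    linarith
  -- hence W is forward invariant
  have hWmem : ∀ x ∈ W, ∀ t : ℝ, 0 ≤ t → φ x t ∈ W := by
    intro x hx t ht
    have htraj : ∀ q ∈ Icc (0:ℝ) t, φ x q ∈ Ω :=
      fun q hq => hΩsub (hWtraj x hx t ht q hq)
    exact ⟨hWtraj x hx t ht t ⟨ht, le_refl t⟩,
      le_trans (Vle x (hWΩ hx) t ht htraj) hx.2⟩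
  -- V is monotone along trajectories starting in W
  have VmonoW : ∀ y ∈ W, ∀ s t : ℝ, 0 ≤ s → s ≤ t → V (φ y t) ≤ V (φ y s) := by
    intro y hy s t hs hst
    have hz : φ y s ∈ W := hWmem y hy s hs
    have htraj : ∀ q ∈ Icc (0:ℝ) (t - s), φ (φ y s) q ∈ Ω := by
      intro q hq
      rw [hsemi y s hs q hq.1]
      exact hWΩ (hWmem y hy (s + q) (by linarith [hq.1]))
    have := Vle (φ y s) (hWΩ hz) (t - s) (by linarith) htraj
    rwa [hsemi y s hs (t - s) (by linarith), add_sub_cancel] at this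

  -- Assemble the attractor conditions
  refine ⟨hAc, hAne, ?_, ?_, ?_⟩
  · -- forward invariance of A
    intro x hx t ht
    exact memA x hx t ht (fun q hq => hWΩ (hWmem x (hAW hx) q hq.1))
  · -- attraction
    intro x hx
    refine ⟨r₀, hr₀, ?_⟩
    intro ε hε
    have hε' : 0 < min ε ε₀ := lt_min hε hε₀
    obtain ⟨m', hm', hm'p⟩ := claim_m (min ε ε₀) hε'
    have main : ∃ T ≥ (0:ℝ), ∀ y ∈ W, ∀ t ≥ T, V (φ y t) < m' := by
      by_cases hC : (W ∩ {z | m' ≤ V z}).Nonempty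
      · -- Lipschitz bound for f on a large ball
        obtain ⟨R, hR⟩ := hWcpt.isBounded.subset_closedBall 0
        have hfd : Continuous fun z => fderiv ℝ f z := hf.continuous_fderiv one_ne_zero
        obtain ⟨Cb, hCb⟩ := (isCompact_closedBall (0:EuclideanSpace ℝ (Fin n)) R).exists_bound_of_continuousOn hfd.continuousOn
        set Kf : NNReal := Real.toNNReal Cb with hKfdef
        have hKf : LipschitzOnWith Kf f (closedBall 0 R) := by
          apply Convex.lipschitzOnWith_of_nnnorm_fderiv_le
            (fun z _ => (hf.differentiable one_ne_zero).differentiableAt) ?_ (convex_closedBall _ _)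
          intro z hz
          rw [← NNReal.coe_le_coe, coe_nnnorm, hKfdef, Real.coe_toNNReal']
          exact le_max_of_le_left (hCb z hz)
        -- Grönwall estimate for the time-one map on W
        have hLip : ∀ y ∈ W, ∀ z ∈ W,
            dist (φ y 1) (φ z 1) ≤ dist y z * Real.exp ((Kf:ℝ) * 1) := by
          intro y hy z hz
          have h := dist_le_of_trajectories_ODE_of_mem (v := fun _ w => f w)
            (s := fun _ => closedBall (0:EuclideanSpace ℝ (Fin n)) R) (K := Kf)
            (fun _ _ => hKf)
            ((hct y).mono (Icc_subset_Ici_self (a := (1:ℝ)) (b := 0)))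
            (fun t ht => (hder y t ht.1).mono (Ici_subset_Ici.2 ht.1))
            (fun t ht => hR (hWmem y hy t ht.1))
            ((hct z).mono (Icc_subset_Ici_self (a := (1:ℝ)) (b := 0)))
            (fun t ht => (hder z t ht.1).mono (Ici_subset_Ici.2 ht.1))
            (fun t ht => hR (hWmem z hz t ht.1))
            (le_of_eq (by rw [hzero, hzero]))
            1 ⟨zero_le_one, le_refl 1⟩
          simpa using h
        set L : NNReal := Real.toNNReal (Real.exp ((Kf:ℝ) * 1)) with hLdef
        have hΦlip : LipschitzOnWith L (fun z => φ z 1) W := by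
          apply LipschitzOnWith.of_dist_le_mul
          intro y hy z hz
          refine le_trans (hLip y hy z hz) ?_
          rw [mul_comm]
          apply mul_le_mul_of_nonneg_right ?_ dist_nonneg
          rw [hLdef, Real.coe_toNNReal _ (Real.exp_pos _).le]
        have hgc : ContinuousOn (fun z => V z - V (φ z 1)) W :=
          (hV.continuousOn).sub (hV.comp_continuousOn hΦlip.continuousOn)
        set C := W ∩ {z | m' ≤ V z} with hCdef
        have hCcpt : IsCompact C := hWcpt.inter_right (isClosed_le continuous_const hV)
        obtain ⟨z₀, hz₀C, hz₀min⟩ := hCcpt.exists_isMinOn hC (hgc.mono inter_subset_left)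
        set μ := V z₀ - V (φ z₀ 1) with hμdef
        have hμpos : 0 < μ := by
          have hz₀A : z₀ ∉ A := by
            intro h
            have h2 := hz₀C.2
            rw [mem_setOf_eq, hVzero _ h] at h2
            linarith
          have := hVdec z₀ ⟨hWΩ hz₀C.1, hz₀A⟩ 1 one_pos
            (fun q hq => hWΩ (hWmem z₀ hz₀C.1 q hq.1))
          rw [hμdef]
          linarith
        obtain ⟨w₀, hw₀W, hw₀max⟩ :=
          hWcpt.exists_isMaxOn ⟨hAne.some, hAW hAne.some_mem⟩ hV.continuousOn
        obtain ⟨N, hN⟩ := exists_nat_gt ((V w₀ - m') / μ)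
        have hNlt : V w₀ - N * μ < m' := by
          have := (div_lt_iff₀ hμpos).1 hN
          linarith
        refine ⟨N, Nat.cast_nonneg N, ?_⟩
        intro y hy t ht
        have hstep : ∀ k : ℕ, (∀ j : ℕ, j ≤ k → m' ≤ V (φ y j)) →
            V (φ y k) ≤ V w₀ - k * μ := by
          intro k
          induction k with
          | zero =>
            intro _
            simp only [Nat.cast_zero, zero_mul, sub_zero, hzero y]
            exact hw₀max hy
          | succ k ih =>
            intro hall
            have hk := ih (fun j hj => hall j (hj.trans (Nat.le_succ k)))
            have hzkW : φ y (k:ℝ) ∈ W := hWmem y hy k (Nat.cast_nonneg k)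
            have hzkC : φ y (k:ℝ) ∈ C := ⟨hzkW, hall k (Nat.le_succ k)⟩
            have hμle : μ ≤ V (φ y (k:ℝ)) - V (φ (φ y (k:ℝ)) 1) := hz₀min hzkC
            have hsg : φ (φ y (k:ℝ)) 1 = φ y ((k:ℝ)+1) :=
              hsemi y k (Nat.cast_nonneg k) 1 zero_le_one
            rw [hsg] at hμle
            push_cast
            push_cast at hk
            linarith
        have hex : ∃ j : ℕ, j ≤ N ∧ V (φ y (j:ℝ)) < m' := by
          by_contra hcon
          push_neg at hcon
          have h1 := hstep N (fun j hj => hcon j hj)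
          have h2 := hcon N (le_refl N)
          linarith
        obtain ⟨j, hjN, hjV⟩ := hex
        have hjt : (j:ℝ) ≤ t := le_trans (by exact_mod_cast hjN) ht
        have := VmonoW y hy j t (Nat.cast_nonneg j) hjt
        linarith
      · refine ⟨0, le_refl 0, fun y hy t ht => ?_⟩
        have hVy : V y < m' := by
          by_contra h
          exact hC ⟨y, hy, not_lt.1 h⟩
        have := VmonoW y hy 0 t (le_refl 0) ht
        rw [hzero] at this
        linarith
    obtain ⟨T, hT0, hTp⟩ := main
    refine ⟨T, hT0, fun y hy t ht => ?_⟩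
    have hyW : y ∈ W := hgoodW y (lt_of_le_of_lt (infDist_le_dist_of_mem hx) hy)
    have h1 : V (φ y t) < m' := hTp y hyW t ht
    have h2 : φ y t ∈ Ω := hWΩ (hWmem y hyW t (hT0.trans ht))
    exact lt_of_lt_of_le (hm'p _ h2 h1) (min_le_left ε ε₀)
  · -- stability
    intro ε hε
    have hε' : 0 < min ε ε₀ := lt_min hε hε₀
    obtain ⟨m', hm', hm'p⟩ := claim_m (min ε ε₀) hε'
    obtain ⟨r, hrpos, hrp⟩ := claim_r (min m' (m₀/2)) (lt_min hm' (by positivity))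
    refine ⟨min r ε₀, lt_min hrpos hε₀, ?_⟩
    intro x hx t ht
    have hxd : infDist x A < min r ε₀ := (mem_thickening_iff_infDist_lt hAne).1 hx
    have hxr : infDist x A < r := lt_of_lt_of_le hxd (min_le_left r ε₀)
    have hxW : x ∈ W :=
      ⟨(hcth x ε₀ hε₀.le).2 (le_of_lt (lt_of_lt_of_le hxd (min_le_right r ε₀))),
        le_of_lt (lt_of_lt_of_le (hrp x hxr) (min_le_right m' (m₀/2)))⟩
    have h1 : V (φ x t) ≤ V x := by
      have := VmonoW x hxW 0 t (le_refl 0) ht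
      rwa [hzero] at this
    have h2 : V x < m' := lt_of_lt_of_le (hrp x hxr) (min_le_left m' (m₀/2))
    exact lt_of_lt_of_le
      (hm'p _ (hWΩ (hWmem x hxW t ht)) (lt_of_le_of_lt h1 h2)) (min_le_left ε ε₀)
end
end
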